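/- arXiv:1103.4051 — 4 statements merged into one kernel-verified Lean document; each statement's English description precedes it below -/
import Mathlib

section
/- Let A be a finite alphabet, let Θ be an involutive antimorphism of A*, and let u be an infinite word over A. Then the Θ-defect of u is finite if and only if there exists an integer H such that for every prefix w of u with |w| ≥ H, the longest Θ-palindromic suffix of w occurs in w exactly once, except for those prefixes of the form w = pa with a ∈ A such that γ_Θ(p) ≠ γ_Θ(w) (i.e., such that neither a nor Θ(a), with a ≠ Θ(a), occurs in p). -/
/-!
Appending a letter `a` to a word `p` creates at most one new `Θ`-palindromic factor, namely the
longest `Θ`-palindromic suffix `s` of `p a`, and `s` is new exactly when it occurs only once in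
`p a`. Hence `D(p a) = D(p)` when `a` brings a new pair `{a, Θ a}` (then `γ_Θ` grows by one and no
palindrome is created), and otherwise `D(p a) - D(p)` is `0` if `s` is unioccurrent and `1` if
not. So the defect is nondecreasing along prefixes, and, being invariant under `Θ`, also
along suffixes. The defect of `u` is therefore the supremum of the defects of its prefixes; it
is finite iff these are eventually constant, i.e. iff from some length on every non-exceptional
prefix has a unioccurrent longest `Θ`-palindromic suffix.
-/

open scoped Classical

/-- The finite word `w` occurs in the infinite word `u` at position `i`. -/
def OccursAt {A : Type*} (u : ℕ → A) (w : List A) (i : ℕ) : Prop :=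
  w = (List.range w.length).map fun k => u (i + k)

/-- The finite word `w` is a factor of the infinite word `u`. -/
def IsFactor {A : Type*} (u : ℕ → A) (w : List A) : Prop :=
  ∃ i, OccursAt u w i

/-- The (involutive) antimorphism of `A*` induced by the letter map `θ`:
it reverses a word and applies `θ` letterwise. -/
def antim {A : Type*} (θ : A → A) (w : List A) : List A :=
  (w.map θ).reverse

/-- `w` is a `θ`-palindrome, i.e. a fixed point of the antimorphism induced by `θ`. -/
def IsPalin {A : Type*} (θ : A → A) (w : List A) : Prop :=
  antim θ w = w

/-- Factor complexity of the infinite word `u`. -/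
noncomputable def fC {A : Type*} (u : ℕ → A) (n : ℕ) : ℕ :=
  Set.ncard {w : List A | w.length = n ∧ IsFactor u w}

/-- `θ`-palindromic complexity of the infinite word `u`. -/
noncomputable def fP {A : Type*} (u : ℕ → A) (θ : A → A) (n : ℕ) : ℕ :=
  Set.ncard {w : List A | w.length = n ∧ IsFactor u w ∧ IsPalin θ w}

/-- `γ_Θ(w)`: the number of pairs `{a, θ a}` with `a` occurring in `w` and `a ≠ θ a`. -/
noncomputable def gammaTheta {A : Type*} (θ : A → A) (w : List A) : ℕ :=
  Set.ncard {s : Set A | ∃ a ∈ w, θ a ≠ a ∧ s = {a, θ a}}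

/-- The set of `θ`-palindromic factors of the finite word `w`. -/
def palFactors {A : Type*} (θ : A → A) (w : List A) : Set (List A) :=
  {p | p <:+: w ∧ IsPalin θ p}

/-- The `Θ`-defect of a finite word `w`. -/
noncomputable def defect {A : Type*} (θ : A → A) (w : List A) : ℤ :=
  (w.length : ℤ) + 1 - gammaTheta θ w - Set.ncard (palFactors θ w)

/-- The number of occurrences of `w` in the finite word `v`. -/
noncomputable def numOcc {A : Type*} (w v : List A) : ℕ :=
  Set.ncard {i : ℕ | i + w.length ≤ v.length ∧ w <+: v.drop i}

section Antim

variable {A : Type*} (θ : A → A)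

theorem antim_cons (a : A) (w : List A) : antim θ (a :: w) = antim θ w ++ [θ a] := by
  simp [antim]

theorem length_antim (w : List A) : (antim θ w).length = w.length := by
  simp [antim]

theorem head?_antim (w : List A) : (antim θ w).head? = w.getLast?.map θ := by
  simp [antim]

theorem antim_antim {θ : A → A} (hθ : Function.Involutive θ) (w : List A) :
    antim θ (antim θ w) = w := by
  simp [antim, List.map_reverse, hθ.comp_self]

theorem mem_antim {θ : A → A} (hθ : Function.Involutive θ) {a : A} {w : List A} :
    a ∈ antim θ w ↔ θ a ∈ w := by
  simp only [antim, List.mem_reverse, List.mem_map]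
  exact ⟨fun ⟨b, hb, hba⟩ => hba ▸ (hθ b).symm ▸ hb, fun h => ⟨θ a, h, hθ a⟩⟩

theorem List.IsSuffix.antim {v w : List A} (h : v <:+ w) : antim θ v <+: antim θ w :=
  (h.map θ).reverse

theorem List.IsInfix.antim {v w : List A} (h : v <:+: w) : antim θ v <:+: antim θ w :=
  (h.map θ).reverse

variable {θ}

theorem IsPalin.prefix_of_suffix {q s : List A} (hq : IsPalin θ q) (hs : IsPalin θ s)
    (h : q <:+ s) : q <+: s :=
  hq ▸ hs ▸ h.antim θ

theorem IsPalin.infix_antim_iff (hθ : Function.Involutive θ) {q w : List A}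
    (hq : IsPalin θ q) : q <:+: antim θ w ↔ q <:+: w := by
  have hq' : antim θ q = q := hq
  constructor
  · intro h
    simpa only [antim_antim hθ, hq'] using h.antim θ
  · intro h
    simpa only [hq'] using h.antim θ

/-- A nonempty `θ`-palindrome ending in `a` begins with `θ a`. -/
theorem IsPalin.eq_nil_of_suffix_snoc {q p : List A} {a : A} (hq : IsPalin θ q)
    (h : q <:+ p ++ [a]) (ha : θ a ≠ a) (hp : θ a ∉ p) : q = [] := by
  obtain rfl | ⟨t, rfl, ht⟩ := List.suffix_concat_iff.1 h
  · rfl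
  have hhead : (t ++ [a]).head? = some (θ a) := by
    rw [← hq, head?_antim]
    simp
  cases t with
  | nil => exact absurd (by simpa using hhead.symm) ha
  | cons b t =>
    simp only [List.cons_append, List.head?_cons, Option.some.injEq] at hhead
    exact absurd (ht.subset (hhead ▸ List.mem_cons_self)) hp

end Antim

section Gamma

variable {A : Type*} {θ : A → A}

def orbitPairs (θ : A → A) (w : List A) : Set (Set A) :=
  {s | ∃ a ∈ w, θ a ≠ a ∧ s = {a, θ a}}

theorem gammaTheta_eq_ncard_orbitPairs (w : List A) :
    gammaTheta θ w = (orbitPairs θ w).ncard :=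
  rfl

theorem orbitPairs_finite (w : List A) : (orbitPairs θ w).Finite := by
  refine (w.toFinset.finite_toSet.image fun a => ({a, θ a} : Set A)).subset ?_
  rintro s ⟨a, ha, -, rfl⟩
  exact ⟨a, by simpa using ha, rfl⟩

theorem pair_apply_eq_pair (hθ : Function.Involutive θ) (a : A) :
    ({θ a, θ (θ a)} : Set A) = {a, θ a} := by
  rw [hθ a, Set.pair_comm]

theorem orbitPairs_antim (hθ : Function.Involutive θ) (w : List A) :
    orbitPairs θ (antim θ w) = orbitPairs θ w := by
  ext s
  simp only [orbitPairs, Set.mem_ofPred_eq, mem_antim hθ]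
  constructor
  · rintro ⟨a, ha, hne, rfl⟩
    exact ⟨θ a, ha, by rwa [hθ a, ne_comm], (pair_apply_eq_pair hθ a).symm⟩
  · rintro ⟨a, ha, hne, rfl⟩
    exact ⟨θ a, by rwa [hθ a], by rwa [hθ a, ne_comm], (pair_apply_eq_pair hθ a).symm⟩

theorem gammaTheta_antim (hθ : Function.Involutive θ) (w : List A) :
    gammaTheta θ (antim θ w) = gammaTheta θ w := by
  simp only [gammaTheta_eq_ncard_orbitPairs, orbitPairs_antim hθ]

theorem orbitPairs_snoc (p : List A) (a : A) :
    orbitPairs θ (p ++ [a]) = orbitPairs θ p ∪ {s | θ a ≠ a ∧ s = {a, θ a}} := by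
  ext s
  simp only [orbitPairs, List.mem_append, List.mem_singleton, Set.mem_union, Set.mem_ofPred_eq]
  constructor
  · rintro ⟨b, hb | rfl, hne, rfl⟩
    exacts [Or.inl ⟨b, hb, hne, rfl⟩, Or.inr ⟨hne, rfl⟩]
  · rintro (⟨b, hb, hne, rfl⟩ | ⟨hne, rfl⟩)
    exacts [⟨b, Or.inl hb, hne, rfl⟩, ⟨a, Or.inr rfl, hne, rfl⟩]

/-- The letters `a` with `γ_Θ(p a) ≠ γ_Θ(p)`, i.e. the exceptional prefixes `p a`. -/
def IsFresh (θ : A → A) (p : List A) (a : A) : Prop :=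
  θ a ≠ a ∧ a ∉ p ∧ θ a ∉ p

theorem gammaTheta_snoc_of_isFresh {p : List A} {a : A} (h : IsFresh θ p a) :
    gammaTheta θ (p ++ [a]) = gammaTheta θ p + 1 := by
  obtain ⟨hne, hap, htp⟩ := h
  have hnew : {s : Set A | θ a ≠ a ∧ s = {a, θ a}} = {{a, θ a}} := by
    ext s
    simp [hne]
  have hnotMem : {a, θ a} ∉ orbitPairs θ p := by
    rintro ⟨b, hb, -, hab⟩
    rcases (hab ▸ Set.mem_insert b _ : b ∈ ({a, θ a} : Set A)) with rfl | rfl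
    exacts [hap hb, htp hb]
  rw [gammaTheta_eq_ncard_orbitPairs, gammaTheta_eq_ncard_orbitPairs, orbitPairs_snoc, hnew,
    Set.union_singleton, Set.ncard_insert_of_notMem hnotMem (orbitPairs_finite p)]

theorem gammaTheta_snoc_of_not_isFresh (hθ : Function.Involutive θ) {p : List A} {a : A}
    (h : ¬ IsFresh θ p a) : gammaTheta θ (p ++ [a]) = gammaTheta θ p := by
  rw [gammaTheta_eq_ncard_orbitPairs, gammaTheta_eq_ncard_orbitPairs, orbitPairs_snoc,
    Set.union_eq_left.2]
  rintro s ⟨hne, rfl⟩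
  by_cases hap : a ∈ p
  · exact ⟨a, hap, hne, rfl⟩
  · have htp : θ a ∈ p := by
      by_contra htp
      exact h ⟨hne, hap, htp⟩
    exact ⟨θ a, htp, by rwa [hθ a, ne_comm], (pair_apply_eq_pair hθ a).symm⟩

end Gamma

section PalFactors

variable {A : Type*} {θ : A → A}

theorem palFactors_finite (w : List A) : (palFactors θ w).Finite :=
  w.sublists.toFinset.finite_toSet.subset fun _ hp => by simpa using hp.1.sublist

theorem nil_mem_palFactors (w : List A) : [] ∈ palFactors θ w :=
  ⟨List.nil_infix, rfl⟩

theorem palFactors_mono {v w : List A} (h : v <:+: w) : palFactors θ v ⊆ palFactors θ w :=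
  fun _ hp => ⟨hp.1.trans h, hp.2⟩

theorem palFactors_antim (hθ : Function.Involutive θ) (w : List A) :
    palFactors θ (antim θ w) = palFactors θ w := by
  ext q
  exact and_congr_left fun hq => hq.infix_antim_iff hθ

theorem suffix_of_mem_palFactors_snoc_diff {q p : List A} {a : A}
    (hq : q ∈ palFactors θ (p ++ [a]) \ palFactors θ p) : q <:+ p ++ [a] :=
  (List.infix_concat_iff.1 hq.1.1).resolve_right fun h => hq.2 ⟨h, hq.1.2⟩

theorem palFactors_snoc_of_isFresh {p : List A} {a : A} (h : IsFresh θ p a) :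
    palFactors θ (p ++ [a]) = palFactors θ p := by
  refine (palFactors_mono (List.prefix_append p [a]).isInfix).antisymm' fun q hq => ?_
  by_contra hqp
  have hsuf := suffix_of_mem_palFactors_snoc_diff ⟨hq, hqp⟩
  exact hqp (hq.2.eq_nil_of_suffix_snoc hsuf h.1 h.2.2 ▸ nil_mem_palFactors p)

def IsLongestPalSuffix (θ : A → A) (s w : List A) : Prop :=
  s <:+ w ∧ IsPalin θ s ∧ ∀ t, t <:+ w → IsPalin θ t → t.length ≤ s.length

theorem exists_isLongestPalSuffix (θ : A → A) (w : List A) : ∃ s, IsLongestPalSuffix θ s w := by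
  obtain ⟨s, hs, hmax⟩ := (w.tails.filter fun t => IsPalin θ t).toFinset.exists_max_image
    List.length ⟨[], by simp [List.nil_suffix, IsPalin, antim]⟩
  simp only [List.mem_toFinset, List.mem_filter, List.mem_tails, decide_eq_true_eq] at hs hmax
  exact ⟨s, hs.1, hs.2, fun t ht htpal => hmax t ⟨ht, htpal⟩⟩

theorem IsLongestPalSuffix.unique {s s' w : List A} (hs : IsLongestPalSuffix θ s w)
    (hs' : IsLongestPalSuffix θ s' w) : s' = s :=
  (List.suffix_of_suffix_length_le hs'.1 hs.1 (hs.2.2 s' hs'.1 hs'.2.1)).eq_of_length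
    (le_antisymm (hs.2.2 s' hs'.1 hs'.2.1) (hs'.2.2 s hs.1 hs.2.1))

/-- Any new palindromic factor of `p ++ [a]` is a palindromic suffix, hence a suffix and so a
prefix of the longest one `s`; a proper prefix of `s` already occurs in `p`. -/
theorem palFactors_snoc_diff {s p : List A} {a : A}
    (hs : IsLongestPalSuffix θ s (p ++ [a])) :
    palFactors θ (p ++ [a]) \ palFactors θ p = if s <:+: p then ∅ else {s} := by
  have hsub : palFactors θ (p ++ [a]) \ palFactors θ p ⊆ {s} := by
    intro q hq
    have hqw := suffix_of_mem_palFactors_snoc_diff hq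
    have hqs := List.suffix_of_suffix_length_le hqw hs.1 (hs.2.2 q hqw hq.1.2)
    have hpre := hq.1.2.prefix_of_suffix hs.2.1 hqs
    by_contra hne
    obtain rfl | ⟨t, rfl, ht⟩ := List.suffix_concat_iff.1 hs.1
    · exact hne (List.prefix_nil.1 hpre)
    · have hqt := (List.prefix_concat_iff.1 hpre).resolve_left hne
      exact hq.2 ⟨hqt.isInfix.trans ht.isInfix, hq.1.2⟩
  have hmem : s ∈ palFactors θ (p ++ [a]) \ palFactors θ p ↔ ¬ s <:+: p :=
    ⟨fun h hsp => h.2 ⟨hsp, hs.2.1⟩, fun h => ⟨⟨hs.1.isInfix, hs.2.1⟩, fun hsp => h hsp.1⟩⟩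
  rcases Set.subset_singleton_iff_eq.1 hsub with he | he <;> rw [he] at hmem ⊢ <;>
    split_ifs with hsp
  · rfl
  · exact absurd (hmem.2 hsp) (Set.notMem_empty s)
  · exact absurd hsp (hmem.1 rfl)
  · rfl

end PalFactors

section NumOcc

variable {A : Type*}

theorem numOcc_eq_one_iff_of_suffix {s w : List A} (h : s <:+ w) :
    numOcc s w = 1 ↔
      ∀ i, i + s.length ≤ w.length → s <+: w.drop i → i = w.length - s.length := by
  have hmem : w.length - s.length ∈ {i | i + s.length ≤ w.length ∧ s <+: w.drop i} :=
    ⟨by have := h.length_le; omega, (List.suffix_iff_eq_drop.1 h) ▸ List.prefix_rfl⟩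
  rw [numOcc, Set.ncard_eq_one]
  constructor
  · rintro ⟨m, hm⟩ i hi hpre
    rw [hm] at hmem
    have hi' : i ∈ ({m} : Set ℕ) := hm ▸ ⟨hi, hpre⟩
    exact hi'.trans hmem.symm
  · intro huniq
    exact ⟨_, Set.eq_singleton_iff_unique_mem.2 ⟨hmem, fun i hi => huniq i hi.1 hi.2⟩⟩

theorem numOcc_snoc_eq_one_iff {s p : List A} {a : A} (h : s <:+ p ++ [a]) :
    numOcc s (p ++ [a]) = 1 ↔ ¬ s <:+: p := by
  rw [numOcc_eq_one_iff_of_suffix h, List.length_append, List.length_singleton]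
  constructor
  · rintro huniq ⟨x, y, rfl⟩
    have hocc := huniq x.length (by simp; omega) (by simp [List.drop_left'])
    simp at hocc
    omega
  · intro hsp i hi hpre
    by_contra hne
    have hip : i + s.length ≤ p.length := by omega
    rw [List.drop_append_of_le_length (by omega)] at hpre
    have hpre' := List.prefix_of_prefix_length_le hpre (List.prefix_append _ _)
      (by simp; omega)
    exact hsp (hpre'.isInfix.trans (List.drop_suffix i p).isInfix)

end NumOcc

section Defect

variable {A : Type*} {θ : A → A}

theorem defect_antim (hθ : Function.Involutive θ) (w : List A) :
    defect θ (antim θ w) = defect θ w := by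
  rw [defect, defect, gammaTheta_antim hθ, palFactors_antim hθ, length_antim]

theorem defect_snoc (p : List A) (a : A) :
    defect θ (p ++ [a]) = defect θ p + 1 - (gammaTheta θ (p ++ [a]) - gammaTheta θ p)
      - (palFactors θ (p ++ [a]) \ palFactors θ p).ncard := by
  rw [defect, defect, ← Set.ncard_sdiff_add_ncard_of_subset
    (palFactors_mono (List.prefix_append p [a]).isInfix) (palFactors_finite _)]
  simp only [List.length_append, List.length_singleton]
  push_cast
  ring

theorem defect_snoc_of_isFresh {p : List A} {a : A} (h : IsFresh θ p a) :
    defect θ (p ++ [a]) = defect θ p := by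
  rw [defect_snoc, gammaTheta_snoc_of_isFresh h, palFactors_snoc_of_isFresh h]
  simp

theorem defect_snoc_of_not_isFresh (hθ : Function.Involutive θ) {s p : List A} {a : A}
    (h : ¬ IsFresh θ p a) (hs : IsLongestPalSuffix θ s (p ++ [a])) :
    defect θ (p ++ [a]) = defect θ p + if s <:+: p then 1 else 0 := by
  rw [defect_snoc, gammaTheta_snoc_of_not_isFresh hθ h, palFactors_snoc_diff hs]
  split_ifs <;> simp

theorem defect_le_defect_snoc (hθ : Function.Involutive θ) (p : List A) (a : A) :
    defect θ p ≤ defect θ (p ++ [a]) := by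
  by_cases h : IsFresh θ p a
  · exact (defect_snoc_of_isFresh h).ge
  · obtain ⟨s, hs⟩ := exists_isLongestPalSuffix θ (p ++ [a])
    rw [defect_snoc_of_not_isFresh hθ h hs]
    split_ifs <;> simp

theorem defect_le_defect_cons (hθ : Function.Involutive θ) (a : A) (w : List A) :
    defect θ w ≤ defect θ (a :: w) := by
  rw [← defect_antim hθ w, ← defect_antim hθ (a :: w), antim_cons]
  exact defect_le_defect_snoc hθ _ _

theorem List.IsSuffix.defect_le (hθ : Function.Involutive θ) {v w : List A} (h : v <:+ w) :
    defect θ v ≤ defect θ w := by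
  obtain ⟨x, rfl⟩ := h
  induction x with
  | nil => rfl
  | cons b x ih => exact ih.trans (defect_le_defect_cons hθ b (x ++ v))

theorem defect_snoc_eq_iff (hθ : Function.Involutive θ) (p : List A) (a : A) :
    defect θ (p ++ [a]) = defect θ p ↔
      (gammaTheta θ p = gammaTheta θ (p ++ [a]) →
        ∀ s, IsLongestPalSuffix θ s (p ++ [a]) → numOcc s (p ++ [a]) = 1) := by
  by_cases h : IsFresh θ p a
  · refine iff_of_true (defect_snoc_of_isFresh h) fun hγ => ?_
    rw [gammaTheta_snoc_of_isFresh h] at hγ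
    omega
  · obtain ⟨s, hs⟩ := exists_isLongestPalSuffix θ (p ++ [a])
    have hlps : (∀ s', IsLongestPalSuffix θ s' (p ++ [a]) → numOcc s' (p ++ [a]) = 1) ↔
        ¬ s <:+: p := by
      rw [← numOcc_snoc_eq_one_iff hs.1]
      exact ⟨fun hall => hall s hs, fun hs1 s' hs' => hs'.unique hs ▸ hs1⟩
    rw [defect_snoc_of_not_isFresh hθ h hs, gammaTheta_snoc_of_not_isFresh hθ h, hlps]
    split_ifs <;> simp [*]

end Defect

section Prefixes

variable {A : Type*}

def pref (u : ℕ → A) (n : ℕ) : List A :=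
  (List.range n).map u

theorem length_pref (u : ℕ → A) (n : ℕ) : (pref u n).length = n := by
  simp [pref]

theorem pref_succ (u : ℕ → A) (n : ℕ) : pref u (n + 1) = pref u n ++ [u n] := by
  simp [pref, List.range_succ]

theorem occursAt_zero_iff {u : ℕ → A} {w : List A} : OccursAt u w 0 ↔ w = pref u w.length := by
  simp [OccursAt, pref]

theorem OccursAt.suffix_pref {u : ℕ → A} {w : List A} {i : ℕ} (h : OccursAt u w i) :
    w <:+ pref u (i + w.length) :=
  ⟨pref u i, by simp only [pref]; rw [List.range_add, List.map_append, List.map_map]; exact congrArg _ h⟩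

theorem isFactor_pref (u : ℕ → A) (n : ℕ) : IsFactor u (pref u n) :=
  ⟨0, occursAt_zero_iff.2 (by rw [length_pref])⟩

end Prefixes

theorem Monotone.bddAbove_range_iff_eventuallyConst {α : Type*} [SemilatticeSup α]
    [Nonempty α] {f : α → ℤ} (hf : Monotone f) :
    BddAbove (Set.range f) ↔ Filter.EventuallyConst f Filter.atTop := by
  rw [Filter.eventuallyConst_atTop]
  constructor
  · intro hbdd
    obtain ⟨i, hi⟩ := Int.csSup_mem (Set.range_nonempty f) hbdd
    exact ⟨i, fun j hij => le_antisymm (hi ▸ le_csSup hbdd ⟨j, rfl⟩) (hf hij)⟩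
  · rintro ⟨i, hi⟩
    refine ⟨f i, ?_⟩
    rintro _ ⟨j, rfl⟩
    exact (hf le_sup_left).trans (hi _ le_sup_right).le

theorem defect_bddAbove_iff_eventuallyConst {A : Type*} {θ : A → A}
    (hθ : Function.Involutive θ) (u : ℕ → A) :
    (∃ B : ℤ, ∀ w : List A, IsFactor u w → defect θ w ≤ B) ↔
      Filter.EventuallyConst (fun n => defect θ (pref u n)) Filter.atTop := by
  have hmono : Monotone fun n => defect θ (pref u n) :=
    monotone_nat_of_le_succ fun n => pref_succ u n ▸ defect_le_defect_snoc hθ _ _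
  rw [← hmono.bddAbove_range_iff_eventuallyConst]
  constructor
  · rintro ⟨B, hB⟩
    exact ⟨B, by rintro _ ⟨n, rfl⟩; exact hB _ (isFactor_pref u n)⟩
  · rintro ⟨B, hB⟩
    exact ⟨B, fun w ⟨i, hw⟩ => (hw.suffix_pref.defect_le hθ).trans (hB ⟨_, rfl⟩)⟩

theorem finite_defect_iff_longest_pal_suffix_unioccurrent_general
    {A : Type*} (θ : A → A) (hθ : Function.Involutive θ)
    (u : ℕ → A) :
    (∃ B : ℤ, ∀ w : List A, IsFactor u w → defect θ w ≤ B) ↔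
    ∃ H : ℕ, ∀ w : List A, OccursAt u w 0 → H ≤ w.length →
      (∀ (p : List A) (a : A), w = p ++ [a] → gammaTheta θ p = gammaTheta θ w) →
      ∀ s : List A, s <:+ w → IsPalin θ s →
        (∀ t : List A, t <:+ w → IsPalin θ t → t.length ≤ s.length) →
        numOcc s w = 1 := by
  rw [defect_bddAbove_iff_eventuallyConst hθ, Filter.eventuallyConst_atTop_nat]
  constructor
  · rintro ⟨H, hH⟩
    refine ⟨H + 1, fun w hw hlen hγ s hs hspal hsmax => ?_⟩
    obtain ⟨n, hn⟩ : ∃ n, w.length = n + 1 := ⟨w.length - 1, by omega⟩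
    rw [occursAt_zero_iff, hn, pref_succ] at hw
    subst hw
    have hstep := hH n (by simp only [List.length_append, length_pref, List.length_singleton] at hlen; omega)
    rw [pref_succ] at hstep
    exact (defect_snoc_eq_iff hθ _ _).1 hstep (hγ _ _ rfl) s ⟨hs, hspal, hsmax⟩
  · rintro ⟨H, hH⟩
    refine ⟨H, fun n hn => ?_⟩
    simp only [pref_succ, defect_snoc_eq_iff hθ]
    rintro hγ s ⟨hs, hspal, hsmax⟩
    refine hH _ (pref_succ u n ▸ occursAt_zero_iff.2 (by rw [length_pref]))
      (by simp only [List.length_append, length_pref, List.length_singleton]; omega)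
      (fun q b hqb => ?_) s hs hspal hsmax
    obtain ⟨rfl, -⟩ := List.append_inj' hqb rfl
    exact hγ

/-- An infinite word `u` over a finite alphabet has finite `Θ`-defect
if and only if there exists `H` such that for every prefix `w` of `u` with `|w| ≥ H`
which is not of the exceptional form `w = p ++ [a]` with `γ_Θ(p) ≠ γ_Θ(w)`,
the longest `Θ`-palindromic suffix of `w` occurs in `w` exactly once. -/
theorem finite_defect_iff_longest_pal_suffix_unioccurrent
    {A : Type*} [Fintype A] (θ : A → A) (hθ : Function.Involutive θ)
    (u : ℕ → A) :
    (∃ B : ℤ, ∀ w : List A, IsFactor u w → defect θ w ≤ B) ↔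
    ∃ H : ℕ, ∀ w : List A, OccursAt u w 0 → H ≤ w.length →
      (∀ (p : List A) (a : A), w = p ++ [a] → gammaTheta θ p = gammaTheta θ w) →
      ∀ s : List A, s <:+ w → IsPalin θ s →
        (∀ t : List A, t <:+ w → IsPalin θ t → t.length ≤ s.length) →
        numOcc s w = 1 :=
  finite_defect_iff_longest_pal_suffix_unioccurrent_general θ hθ u
end

section
/- Let Θ₁ and Θ₂ be two distinct commuting involutive antimorphisms of A* for a finite alphabet A, and let u be an infinite word over A whose language is closed under both Θ₁ and Θ₂. Then for all n ≥ 1: ΔC(n) + 4 ≥ P_{Θ₁}(n) + P_{Θ₂}(n) − P_{Θ₁,Θ₂}(n) + P_{Θ₁}(n+1) + P_{Θ₂}(n+1) − P_{Θ₁,Θ₂}(n+1), where P_{Θ₁,Θ₂}(k) = #{ w ∈ L_k(u) : w = Θ₁(w) = Θ₂(w) }. -/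
open scoped Classical

/-- The number of factors of `u` of length `n` fixed simultaneously by both
antimorphisms induced by `θ₁` and `θ₂`. -/
noncomputable def fP2 {A : Type*} (u : ℕ → A) (θ₁ θ₂ : A → A) (n : ℕ) : ℕ :=
  Set.ncard {w : List A | w.length = n ∧ IsFactor u w ∧ IsPalin θ₁ w ∧ IsPalin θ₂ w}

namespace TA
variable {A : Type*}

def win (u : ℕ → A) (k i : ℕ) : List A := (List.range k).map fun j => u (i + j)

@[simp] lemma win_length (u : ℕ → A) (k i : ℕ) : (win u k i).length = k := by
  simp [win]

lemma isFactor_win (u : ℕ → A) (k i : ℕ) : IsFactor u (win u k i) :=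
  ⟨i, by simp [OccursAt, win]⟩

lemma factor_eq_win {u : ℕ → A} {w : List A} (h : IsFactor u w) : ∃ i, w = win u w.length i := by
  obtain ⟨i, hi⟩ := h; exact ⟨i, hi⟩

lemma win_succ (u : ℕ → A) (k i : ℕ) : win u (k+1) i = win u k i ++ [u (i+k)] := by
  simp [win, List.range_succ]

lemma win_succ' (u : ℕ → A) (k i : ℕ) : win u (k+1) i = u i :: win u k (i+1) := by
  simp [win, List.range_succ_eq_map, List.map_map, Function.comp_def]
  intro a _; congr 1; omega

-- antim toolkit
@[simp] lemma antim_length (f : A → A) (w : List A) : (antim f w).length = w.length := by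
  simp [antim]

lemma antim_antim' (f g : A → A) (w : List A) : antim f (antim g w) = w.map (f ∘ g) := by
  simp [antim, List.map_reverse, List.map_map]

lemma antim_map (f g : A → A) (w : List A) : antim f (w.map g) = antim (f ∘ g) w := by
  simp [antim, List.map_map]

lemma map_antim (f g : A → A) (w : List A) : (antim f w).map g = antim (g ∘ f) w := by
  simp [antim, List.map_reverse, List.map_map]

lemma antim_inv {f : A → A} (hf : Function.Involutive f) (w : List A) :
    antim f (antim f w) = w := by
  rw [antim_antim', hf.comp_self, List.map_id]

lemma antim_append (f : A → A) (v w : List A) :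
    antim f (v ++ w) = antim f w ++ antim f v := by
  simp [antim]

end TA

section Grp
variable {A : Type*} {θ₁ θ₂ : A → A}

lemma comp_a (h₁ : Function.Involutive θ₁) : θ₁ ∘ (θ₁ ∘ θ₂) = θ₂ := by
  funext a; simp [Function.comp, h₁ _]

lemma comp_b (h₁ : Function.Involutive θ₁) (hcomm : θ₁ ∘ θ₂ = θ₂ ∘ θ₁) :
    (θ₁ ∘ θ₂) ∘ θ₁ = θ₂ := by
  funext a
  have h := congrFun hcomm (θ₁ a)
  simp only [Function.comp] at h ⊢
  rw [h, h₁ _]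

lemma comp_c (h₂ : Function.Involutive θ₂) (hcomm : θ₁ ∘ θ₂ = θ₂ ∘ θ₁) :
    θ₂ ∘ (θ₁ ∘ θ₂) = θ₁ := by
  funext a
  have h := congrFun hcomm a
  simp only [Function.comp] at h ⊢
  rw [h, h₂ _]

lemma comp_d (h₂ : Function.Involutive θ₂) : (θ₁ ∘ θ₂) ∘ θ₂ = θ₁ := by
  funext a; simp [Function.comp, h₂ _]

lemma comp_phi (h₁ : Function.Involutive θ₁) (h₂ : Function.Involutive θ₂)
    (hcomm : θ₁ ∘ θ₂ = θ₂ ∘ θ₁) : (θ₁ ∘ θ₂) ∘ (θ₁ ∘ θ₂) = id := by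
  funext a
  have h := congrFun hcomm (θ₂ a)
  simp only [Function.comp, id] at h ⊢
  rw [← h, h₁ _, h₂ _]

end Grp

set_option linter.unusedSectionVars false
namespace TA
section Orb
variable {A : Type*} (θ₁ θ₂ : A → A)

def MP (w : List A) : List A := w.map (θ₁ ∘ θ₂)

@[simp] lemma MP_length (w : List A) : (MP θ₁ θ₂ w).length = w.length := by simp [MP]

noncomputable def orb (w : List A) : Finset (List A) :=
  {w, MP θ₁ θ₂ w, antim θ₁ w, antim θ₂ w}

variable {θ₁ θ₂}
variable (h₁ : Function.Involutive θ₁) (h₂ : Function.Involutive θ₂)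
variable (hcomm : θ₁ ∘ θ₂ = θ₂ ∘ θ₁)

section Tool
include h₁ h₂ hcomm

lemma mpmp (w : List A) : MP θ₁ θ₂ (MP θ₁ θ₂ w) = w := by
  simp [MP, List.map_map, comp_phi h₁ h₂ hcomm]

lemma a1a2 (w : List A) : antim θ₁ (antim θ₂ w) = MP θ₁ θ₂ w := antim_antim' _ _ _

lemma a2a1 (w : List A) : antim θ₂ (antim θ₁ w) = MP θ₁ θ₂ w := by
  rw [antim_antim', MP, ← hcomm]

lemma a1mp (w : List A) : antim θ₁ (MP θ₁ θ₂ w) = antim θ₂ w := by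
  rw [MP, antim_map, comp_a h₁]

lemma mpa1 (w : List A) : MP θ₁ θ₂ (antim θ₁ w) = antim θ₂ w := by
  rw [MP, map_antim, comp_b h₁ hcomm]

lemma a2mp (w : List A) : antim θ₂ (MP θ₁ θ₂ w) = antim θ₁ w := by
  rw [MP, antim_map, comp_c h₂ hcomm]

lemma mpa2 (w : List A) : MP θ₁ θ₂ (antim θ₂ w) = antim θ₁ w := by
  rw [MP, map_antim, comp_d h₂]

end Tool

lemma mem_orb_self (w : List A) : w ∈ orb θ₁ θ₂ w := by simp [orb]

lemma mem_orb_iff {x w : List A} :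
    x ∈ orb θ₁ θ₂ w ↔ x = w ∨ x = MP θ₁ θ₂ w ∨ x = antim θ₁ w ∨ x = antim θ₂ w := by
  simp [orb]

section Tool2
include h₁ h₂ hcomm

lemma orb_eq_of_mem {x w : List A} (hx : x ∈ orb θ₁ θ₂ w) :
    orb θ₁ θ₂ x = orb θ₁ θ₂ w := by
  rcases (mem_orb_iff).1 hx with h | h | h | h <;> subst h
  · rfl
  · unfold orb
    rw [mpmp h₁ h₂ hcomm, a1mp h₁ h₂ hcomm, a2mp h₁ h₂ hcomm]
    ext y; simp; tauto
  · unfold orb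
    rw [mpa1 h₁ h₂ hcomm, antim_inv h₁, a2a1 h₁ h₂ hcomm]
    ext y; simp; tauto
  · unfold orb
    rw [mpa2 h₁ h₂ hcomm, antim_inv h₂, a1a2 h₁ h₂ hcomm]
    ext y; simp; tauto

lemma pal1_invar {x w : List A} (hx : x ∈ orb θ₁ θ₂ w) :
    (antim θ₁ x = x) ↔ (antim θ₁ w = w) := by
  rcases (mem_orb_iff).1 hx with h | h | h | h <;> subst h
  · rfl
  · rw [a1mp h₁ h₂ hcomm]
    constructor
    · intro h
      have := congrArg (antim θ₂) h
      rw [antim_inv h₂, a2mp h₁ h₂ hcomm] at this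
      exact this.symm
    · intro h
      conv_lhs => rw [← h]
      rw [a2a1 h₁ h₂ hcomm]
  · rw [antim_inv h₁]
    exact eq_comm
  · rw [a1a2 h₁ h₂ hcomm]
    constructor
    · intro h
      have := congrArg (antim θ₂) h
      rw [a2mp h₁ h₂ hcomm, antim_inv h₂] at this
      exact this
    · intro h
      conv_lhs => rw [← h]
      rw [mpa1 h₁ h₂ hcomm]

lemma pal2_invar {x w : List A} (hx : x ∈ orb θ₁ θ₂ w) :
    (antim θ₂ x = x) ↔ (antim θ₂ w = w) := by
  rcases (mem_orb_iff).1 hx with h | h | h | h <;> subst h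
  · rfl
  · rw [a2mp h₁ h₂ hcomm]
    constructor
    · intro h
      have := congrArg (antim θ₁) h
      rw [antim_inv h₁, a1mp h₁ h₂ hcomm] at this
      exact this.symm
    · intro h
      conv_lhs => rw [← h]
      rw [a1a2 h₁ h₂ hcomm]
  · rw [a2a1 h₁ h₂ hcomm]
    constructor
    · intro h
      have := congrArg (antim θ₁) h
      rw [a1mp h₁ h₂ hcomm, antim_inv h₁] at this
      exact this
    · intro h
      conv_lhs => rw [← h]
      rw [mpa2 h₁ h₂ hcomm]
  · rw [antim_inv h₂]
    exact eq_comm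

lemma phifix_invar {x w : List A} (hx : x ∈ orb θ₁ θ₂ w) :
    (MP θ₁ θ₂ x = x) ↔ (MP θ₁ θ₂ w = w) := by
  rcases (mem_orb_iff).1 hx with h | h | h | h <;> subst h
  · rfl
  · rw [mpmp h₁ h₂ hcomm]
    exact eq_comm
  · rw [mpa1 h₁ h₂ hcomm]
    constructor
    · intro h
      have := congrArg (antim θ₁) h
      rw [a1a2 h₁ h₂ hcomm, antim_inv h₁] at this
      exact this
    · intro h
      conv_lhs => rw [← h]
      rw [a2mp h₁ h₂ hcomm]
  · rw [mpa2 h₁ h₂ hcomm]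
    constructor
    · intro h
      have := congrArg (antim θ₂) h
      rw [a2a1 h₁ h₂ hcomm, antim_inv h₂] at this
      exact this
    · intro h
      conv_lhs => rw [← h]
      rw [a1mp h₁ h₂ hcomm]

end Tool2
end Orb
end TA

set_option linter.unusedSectionVars false
namespace TA
section Vals
variable {A : Type*} {θ₁ θ₂ : A → A}
variable (h₁ : Function.Involutive θ₁) (h₂ : Function.Involutive θ₂)
variable (hcomm : θ₁ ∘ θ₂ = θ₂ ∘ θ₁)
variable [DecidablePred (fun x : List A => antim θ₁ x = x)]
variable [DecidablePred (fun x : List A => antim θ₂ x = x)]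
variable [DecidablePred (fun x : List A => antim θ₁ x = x ∧ antim θ₂ x = x)]

lemma mem_orb_mp (w : List A) : MP θ₁ θ₂ w ∈ orb θ₁ θ₂ w := by simp [orb]
lemma mem_orb_a1 (w : List A) : antim θ₁ w ∈ orb θ₁ θ₂ w := by simp [orb]
lemma mem_orb_a2 (w : List A) : antim θ₂ w ∈ orb θ₁ θ₂ w := by simp [orb]

include h₁ h₂ hcomm

lemma d1 {w : List A} : MP θ₁ θ₂ w = antim θ₁ w ↔ antim θ₂ w = w := by
  constructor
  · intro h
    have := congrArg (antim θ₁) h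
    rwa [a1mp h₁ h₂ hcomm, antim_inv h₁] at this
  · intro h
    conv_rhs => rw [← h]
    exact (a1a2 h₁ h₂ hcomm w).symm

lemma d2 {w : List A} : MP θ₁ θ₂ w = antim θ₂ w ↔ antim θ₁ w = w := by
  constructor
  · intro h
    have := congrArg (antim θ₂) h
    rwa [a2mp h₁ h₂ hcomm, antim_inv h₂] at this
  · intro h
    conv_rhs => rw [← h]
    exact (a2a1 h₁ h₂ hcomm w).symm

lemma d3 {w : List A} : antim θ₁ w = antim θ₂ w ↔ MP θ₁ θ₂ w = w := by
  constructor
  · intro h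
    have := congrArg (antim θ₂) h
    rwa [a2a1 h₁ h₂ hcomm, antim_inv h₂] at this
  · intro h
    conv_rhs => rw [← h]
    exact (a2mp h₁ h₂ hcomm w).symm

lemma orb_vals (w : List A) :
    ((((orb θ₁ θ₂ w).card : ℤ)
      + ((orb θ₁ θ₂ w).filter (fun x => antim θ₁ x = x)).card
      + ((orb θ₁ θ₂ w).filter (fun x => antim θ₂ x = x)).card
      - ((orb θ₁ θ₂ w).filter (fun x => antim θ₁ x = x ∧ antim θ₂ x = x)).card
      = (if MP θ₁ θ₂ w = w then 2 else 4)) ∧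
     (((orb θ₁ θ₂ w).card : ℤ)
      - ((orb θ₁ θ₂ w).filter (fun x => antim θ₁ x = x)).card
      - ((orb θ₁ θ₂ w).filter (fun x => antim θ₂ x = x)).card
      + ((orb θ₁ θ₂ w).filter (fun x => antim θ₁ x = x ∧ antim θ₂ x = x)).card
      = if (antim θ₁ w = w ∨ antim θ₂ w = w) then 0 else
          if MP θ₁ θ₂ w = w then 2 else 4)) := by
  by_cases hp1 : antim θ₁ w = w
  · by_cases hp2 : antim θ₂ w = w
    · -- both palindromic: singleton orbit
      have hphi : MP θ₁ θ₂ w = w := by rw [← a1a2 h₁ h₂ hcomm, hp2, hp1]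
      have horb : orb θ₁ θ₂ w = {w} := by
        ext x; simp [orb, hp1, hp2, hphi]
      rw [horb]
      simp [Finset.filter_singleton, hp1, hp2, hphi]
    · -- θ₁-palindromic only
      have hphi : ¬ MP θ₁ θ₂ w = w := by
        intro hphi
        apply hp2
        rw [← mpa1 h₁ h₂ hcomm, hp1, hphi]
      have ha2 : antim θ₂ w = MP θ₁ θ₂ w := by
        conv_lhs => rw [← hp1]
        exact a2a1 h₁ h₂ hcomm w
      have horb : orb θ₁ θ₂ w = {w, MP θ₁ θ₂ w} := by
        ext x; simp [orb, hp1, ha2]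
      have hMPp1 : antim θ₁ (MP θ₁ θ₂ w) = MP θ₁ θ₂ w :=
        (pal1_invar h₁ h₂ hcomm (mem_orb_mp w)).2 hp1
      have hMPp2 : ¬ antim θ₂ (MP θ₁ θ₂ w) = MP θ₁ θ₂ w := by
        intro h; exact hp2 ((pal2_invar h₁ h₂ hcomm (mem_orb_mp w)).1 h)
      have hne : w ≠ MP θ₁ θ₂ w := fun h => hphi h.symm
      rw [horb]
      rw [Finset.filter_insert, Finset.filter_insert, Finset.filter_insert,
        Finset.filter_singleton, Finset.filter_singleton, Finset.filter_singleton]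
      simp [hp1, hp2, hphi, hMPp1, hMPp2, Finset.card_pair hne, hne]
  · by_cases hp2 : antim θ₂ w = w
    · -- θ₂-palindromic only
      have hphi : ¬ MP θ₁ θ₂ w = w := by
        intro hphi
        apply hp1
        rw [← mpa2 h₁ h₂ hcomm, hp2, hphi]
      have ha1 : antim θ₁ w = MP θ₁ θ₂ w := by
        conv_lhs => rw [← hp2]
        exact a1a2 h₁ h₂ hcomm w
      have horb : orb θ₁ θ₂ w = {w, MP θ₁ θ₂ w} := by
        ext x; simp [orb, hp2, ha1]; tauto
      have hMPp2 : antim θ₂ (MP θ₁ θ₂ w) = MP θ₁ θ₂ w :=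
        (pal2_invar h₁ h₂ hcomm (mem_orb_mp w)).2 hp2
      have hMPp1 : ¬ antim θ₁ (MP θ₁ θ₂ w) = MP θ₁ θ₂ w := by
        intro h; exact hp1 ((pal1_invar h₁ h₂ hcomm (mem_orb_mp w)).1 h)
      have hne : w ≠ MP θ₁ θ₂ w := fun h => hphi h.symm
      rw [horb]
      rw [Finset.filter_insert, Finset.filter_insert, Finset.filter_insert,
        Finset.filter_singleton, Finset.filter_singleton, Finset.filter_singleton]
      simp [hp1, hp2, hphi, hMPp1, hMPp2, Finset.card_pair hne, hne]
    · by_cases hphi : MP θ₁ θ₂ w = w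
      · -- phi-fixed only
        have ha : antim θ₂ w = antim θ₁ w := by
          conv_lhs => rw [← hphi]
          exact a2mp h₁ h₂ hcomm w
        have horb : orb θ₁ θ₂ w = {w, antim θ₁ w} := by
          ext x; simp [orb, hphi, ha]
        have hb1 : ¬ antim θ₁ (antim θ₁ w) = antim θ₁ w := by
          intro h; exact hp1 ((pal1_invar h₁ h₂ hcomm (mem_orb_a1 w)).1 h)
        have hb2 : ¬ antim θ₂ (antim θ₁ w) = antim θ₁ w := by
          intro h; exact hp2 ((pal2_invar h₁ h₂ hcomm (mem_orb_a1 w)).1 h)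
        have hne : w ≠ antim θ₁ w := fun h => hp1 h.symm
        rw [horb]
        rw [Finset.filter_insert, Finset.filter_insert, Finset.filter_insert,
          Finset.filter_singleton, Finset.filter_singleton, Finset.filter_singleton]
        simp [hp1, hp2, hphi, hb1, hb2, Finset.card_pair hne, hne]
      · -- generic orbit of size 4
        have hd1 : ¬ MP θ₁ θ₂ w = antim θ₁ w := fun h => hp2 ((d1 h₁ h₂ hcomm).1 h)
        have hd2 : ¬ MP θ₁ θ₂ w = antim θ₂ w := fun h => hp1 ((d2 h₁ h₂ hcomm).1 h)
        have hd3 : ¬ antim θ₁ w = antim θ₂ w := fun h => hphi ((d3 h₁ h₂ hcomm).1 h)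
        have hw1 : ¬ w = MP θ₁ θ₂ w := fun h => hphi h.symm
        have hw2 : ¬ w = antim θ₁ w := fun h => hp1 h.symm
        have hw3 : ¬ w = antim θ₂ w := fun h => hp2 h.symm
        have hcard : (orb θ₁ θ₂ w).card = 4 := by
          rw [orb]
          rw [Finset.card_insert_of_notMem (by simp [hw1, hw2, hw3]),
            Finset.card_insert_of_notMem (by simp [hd1, hd2]),
            Finset.card_pair hd3]
        have e1 : (orb θ₁ θ₂ w).filter (fun x => antim θ₁ x = x) = ∅ :=
          Finset.filter_eq_empty_iff.2
            (fun x hx h => hp1 ((pal1_invar h₁ h₂ hcomm hx).1 h))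
        have e2 : (orb θ₁ θ₂ w).filter (fun x => antim θ₂ x = x) = ∅ :=
          Finset.filter_eq_empty_iff.2
            (fun x hx h => hp2 ((pal2_invar h₁ h₂ hcomm hx).1 h))
        have e12 : (orb θ₁ θ₂ w).filter (fun x => antim θ₁ x = x ∧ antim θ₂ x = x) = ∅ :=
          Finset.filter_eq_empty_iff.2
            (fun x hx h => hp1 ((pal1_invar h₁ h₂ hcomm hx).1 h.1))
        rw [hcard, e1, e2, e12]
        simp [hp1, hp2, hphi, hw2, hw3]

end Vals
end TA

namespace TA
section Win2
variable {A : Type*}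

lemma antim_cons (θ : A → A) (x : A) (t : List A) :
    antim θ (x :: t) = antim θ t ++ [θ x] := by
  simp [antim]

lemma antim_concat (θ : A → A) (y : A) (s : List A) :
    antim θ (s ++ [y]) = θ y :: antim θ s := by
  simp [antim]

lemma win_take (u : ℕ → A) (n i : ℕ) : (win u (n+1) i).take n = win u n i := by
  rw [win_succ]
  exact List.take_left' (win_length u n i)

lemma win_drop (u : ℕ → A) (n i : ℕ) : (win u (n+1) i).drop 1 = win u n (i+1) := by
  rw [win_succ']
  simp

lemma mp_win_take (θ₁ θ₂ : A → A) (u : ℕ → A) (n i : ℕ) :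
    (MP θ₁ θ₂ (win u (n+1) i)).take n = MP θ₁ θ₂ (win u n i) := by
  rw [MP, ← List.map_take, win_take]; rfl

lemma mp_win_drop (θ₁ θ₂ : A → A) (u : ℕ → A) (n i : ℕ) :
    (MP θ₁ θ₂ (win u (n+1) i)).drop 1 = MP θ₁ θ₂ (win u n (i+1)) := by
  rw [MP, ← List.map_drop, win_drop]; rfl

lemma antim_win_take (θ : A → A) (u : ℕ → A) (n i : ℕ) :
    (antim θ (win u (n+1) i)).take n = antim θ (win u n (i+1)) := by
  rw [win_succ', antim_cons]
  exact List.take_left' (by simp)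

lemma antim_win_drop (θ : A → A) (u : ℕ → A) (n i : ℕ) :
    (antim θ (win u (n+1) i)).drop 1 = antim θ (win u n i) := by
  rw [win_succ, antim_concat]
  simp

end Win2

section Edge
variable {A : Type*} {θ₁ θ₂ : A → A}
variable (h₁ : Function.Involutive θ₁) (h₂ : Function.Involutive θ₂)
variable (hcomm : θ₁ ∘ θ₂ = θ₂ ∘ θ₁)
include h₁ h₂ hcomm

lemma edge_endpoints {u : ℕ → A} {n i : ℕ} {x : List A}
    (hx : x ∈ orb θ₁ θ₂ (win u (n+1) i)) :
    (orb θ₁ θ₂ (x.take n) = orb θ₁ θ₂ (win u n i) ∧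
     orb θ₁ θ₂ (x.drop 1) = orb θ₁ θ₂ (win u n (i+1))) ∨
    (orb θ₁ θ₂ (x.take n) = orb θ₁ θ₂ (win u n (i+1)) ∧
     orb θ₁ θ₂ (x.drop 1) = orb θ₁ θ₂ (win u n i)) := by
  rcases (mem_orb_iff).1 hx with h | h | h | h <;> subst h
  · left
    rw [win_take, win_drop]
    exact ⟨rfl, rfl⟩
  · left
    rw [mp_win_take, mp_win_drop]
    exact ⟨orb_eq_of_mem h₁ h₂ hcomm (mem_orb_mp _),
      orb_eq_of_mem h₁ h₂ hcomm (mem_orb_mp _)⟩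
  · right
    rw [antim_win_take, antim_win_drop]
    exact ⟨orb_eq_of_mem h₁ h₂ hcomm (mem_orb_a1 _),
      orb_eq_of_mem h₁ h₂ hcomm (mem_orb_a1 _)⟩
  · right
    rw [antim_win_take, antim_win_drop]
    exact ⟨orb_eq_of_mem h₁ h₂ hcomm (mem_orb_a2 _),
      orb_eq_of_mem h₁ h₂ hcomm (mem_orb_a2 _)⟩

lemma pal_loop {u : ℕ → A} {n i : ℕ} {x : List A}
    (hx : x ∈ orb θ₁ θ₂ (win u (n+1) i))
    (hp : antim θ₁ x = x ∨ antim θ₂ x = x) :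
    orb θ₁ θ₂ (win u n i) = orb θ₁ θ₂ (win u n (i+1)) := by
  rcases hp with hp | hp
  · have he : antim θ₁ (win u (n+1) i) = win u (n+1) i :=
      (pal1_invar h₁ h₂ hcomm hx).1 hp
    have ht : win u n (i+1) = antim θ₁ (win u n i) := by
      rw [← win_drop u n i]
      conv_lhs => rw [← he]
      rw [antim_win_drop]
    rw [ht]
    exact (orb_eq_of_mem h₁ h₂ hcomm (mem_orb_a1 _)).symm
  · have he : antim θ₂ (win u (n+1) i) = win u (n+1) i :=
      (pal2_invar h₁ h₂ hcomm hx).1 hp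
    have ht : win u n (i+1) = antim θ₂ (win u n i) := by
      rw [← win_drop u n i]
      conv_lhs => rw [← he]
      rw [antim_win_drop]
    rw [ht]
    exact (orb_eq_of_mem h₁ h₂ hcomm (mem_orb_a2 _)).symm

lemma phifix_edge {u : ℕ → A} {n i : ℕ} {x : List A}
    (hx : x ∈ orb θ₁ θ₂ (win u (n+1) i))
    (hf : MP θ₁ θ₂ x = x) :
    MP θ₁ θ₂ (win u n (i+1)) = win u n (i+1) := by
  have he : MP θ₁ θ₂ (win u (n+1) i) = win u (n+1) i :=
    (phifix_invar h₁ h₂ hcomm hx).1 hf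
  rw [← win_drop u n i, MP, List.map_drop]
  rw [show List.map (θ₁ ∘ θ₂) (win u (n+1) i) = win u (n+1) i from he]

end Edge
end TA

namespace TA
section Fac
variable {A : Type*} [Fintype A]

lemma finite_fac (u : ℕ → A) (k : ℕ) :
    {w : List A | w.length = k ∧ IsFactor u w}.Finite := by
  apply Set.Finite.subset (Set.finite_range (fun f : Fin k → A => List.ofFn f))
  intro w hw
  obtain ⟨hl, -⟩ := hw
  subst hl
  exact ⟨w.get, List.ofFn_get w⟩

noncomputable def Wk (u : ℕ → A) (k : ℕ) : Finset (List A) :=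
  (finite_fac u k).toFinset

lemma mem_Wk {u : ℕ → A} {k : ℕ} {w : List A} :
    w ∈ Wk u k ↔ w.length = k ∧ IsFactor u w := by
  simp [Wk, Set.Finite.mem_toFinset]

lemma win_mem_Wk (u : ℕ → A) (k i : ℕ) : win u k i ∈ Wk u k :=
  mem_Wk.2 ⟨win_length u k i, isFactor_win u k i⟩

lemma orb_subset_Wk {θ₁ θ₂ : A → A} {u : ℕ → A}
    (hc₁ : ∀ w : List A, IsFactor u w → IsFactor u (antim θ₁ w))
    (hc₂ : ∀ w : List A, IsFactor u w → IsFactor u (antim θ₂ w))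
    {k : ℕ} {w : List A} (hw : w ∈ Wk u k) : orb θ₁ θ₂ w ⊆ Wk u k := by
  obtain ⟨hl, hf⟩ := mem_Wk.1 hw
  intro x hx
  rcases (mem_orb_iff).1 hx with h | h | h | h <;> subst h
  · exact hw
  · refine mem_Wk.2 ⟨by simp [hl], ?_⟩
    have : IsFactor u (antim θ₁ (antim θ₂ w)) := hc₁ _ (hc₂ _ hf)
    rwa [antim_antim'] at this
  · exact mem_Wk.2 ⟨by simp [hl], hc₁ _ hf⟩
  · exact mem_Wk.2 ⟨by simp [hl], hc₂ _ hf⟩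

end Fac

section Part
variable {A : Type*} {θ₁ θ₂ : A → A}
variable (h₁ : Function.Involutive θ₁) (h₂ : Function.Involutive θ₂)
variable (hcomm : θ₁ ∘ θ₂ = θ₂ ∘ θ₁)
variable [DecidableEq (Finset (List A))]
include h₁ h₂ hcomm

lemma part_sum (s : Finset (List A)) (horb : ∀ w ∈ s, orb θ₁ θ₂ w ⊆ s)
    (P : List A → Prop) [DecidablePred P] :
    (s.filter P).card = ∑ O ∈ s.image (orb θ₁ θ₂), (O.filter P).card := by
  have hs : s = (s.image (orb θ₁ θ₂)).biUnion id := by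
    ext x
    simp only [Finset.mem_biUnion, Finset.mem_image, id]
    constructor
    · intro hx
      exact ⟨orb θ₁ θ₂ x, ⟨x, hx, rfl⟩, mem_orb_self x⟩
    · rintro ⟨O, ⟨w, hw, rfl⟩, hxO⟩
      exact horb w hw hxO
  have hdisj : ∀ O1 ∈ s.image (orb θ₁ θ₂), ∀ O2 ∈ s.image (orb θ₁ θ₂), O1 ≠ O2 →
      Disjoint ((id O1).filter P) ((id O2).filter P) := by
    intro O1 hO1 O2 hO2 hne
    obtain ⟨w1, hw1, rfl⟩ := Finset.mem_image.1 hO1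
    obtain ⟨w2, hw2, rfl⟩ := Finset.mem_image.1 hO2
    rw [Finset.disjoint_left]
    intro x hx1 hx2
    apply hne
    simp only [id] at hx1 hx2
    rw [← orb_eq_of_mem h₁ h₂ hcomm (Finset.mem_of_mem_filter x hx1),
      ← orb_eq_of_mem h₁ h₂ hcomm (Finset.mem_of_mem_filter x hx2)]
  conv_lhs => rw [hs]
  rw [Finset.filter_biUnion, Finset.card_biUnion hdisj]
  simp

lemma part_card (s : Finset (List A)) (horb : ∀ w ∈ s, orb θ₁ θ₂ w ⊆ s) :
    s.card = ∑ O ∈ s.image (orb θ₁ θ₂), O.card := by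
  have := part_sum h₁ h₂ hcomm s horb (fun _ => True)
  simpa using this

end Part
end TA

/-- If the language of an infinite word `u` is closed under two
distinct commuting involutive antimorphisms `Θ₁`, `Θ₂`, then for all `n ≥ 1`
`ΔC(n) + 4 ≥ P_{Θ₁}(n) + P_{Θ₂}(n) − P_{Θ₁,Θ₂}(n) + P_{Θ₁}(n+1) + P_{Θ₂}(n+1) − P_{Θ₁,Θ₂}(n+1)`. -/
theorem two_antimorphisms_complexity_inequality
    {A : Type*} [Fintype A] (θ₁ θ₂ : A → A)
    (h₁ : Function.Involutive θ₁) (h₂ : Function.Involutive θ₂)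
    (hne : θ₁ ≠ θ₂) (hcomm : θ₁ ∘ θ₂ = θ₂ ∘ θ₁)
    (u : ℕ → A) (hall : ∀ a : A, ∃ i, u i = a)
    (hc₁ : ∀ w : List A, IsFactor u w → IsFactor u (antim θ₁ w))
    (hc₂ : ∀ w : List A, IsFactor u w → IsFactor u (antim θ₂ w))
    (n : ℕ) (hn : 1 ≤ n) :
    (fC u (n+1) : ℤ) - fC u n + 4 ≥
      (fP u θ₁ n : ℤ) + fP u θ₂ n - fP2 u θ₁ θ₂ n
        + fP u θ₁ (n+1) + fP u θ₂ (n+1) - fP2 u θ₁ θ₂ (n+1) := by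
  open TA in
  set hasP : Finset (List A) → Prop :=
    fun O => ∃ x ∈ O, antim θ₁ x = x ∨ antim θ₂ x = x with hhasP
  set hasB : Finset (List A) → Prop := fun O => ∃ x ∈ O, MP θ₁ θ₂ x = x with hhasB
  set Vv := (Wk u n).image (orb θ₁ θ₂) with hVvdef
  set Ee := (Wk u (n+1)).image (orb θ₁ θ₂) with hEedef
  set S := Ee.filter (fun O => ¬ hasP O) with hSdef
  set EB := S.filter hasB with hEBdef
  set NS := S.filter (fun O => ¬ hasB O) with hNSdef
  set VB := Vv.filter hasB with hVBdef
  set NB := Vv.filter (fun O => ¬ hasB O) with hNBdef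
  have hWnclosed : ∀ w ∈ Wk u n, orb θ₁ θ₂ w ⊆ Wk u n :=
    fun w hw => orb_subset_Wk hc₁ hc₂ hw
  have hWeclosed : ∀ w ∈ Wk u (n+1), orb θ₁ θ₂ w ⊆ Wk u (n+1) :=
    fun w hw => orb_subset_Wk hc₁ hc₂ hw
  -- positions
  have hpos : ∀ O ∈ Vv, ∃ i, orb θ₁ θ₂ (win u n i) = O := by
    intro O hO
    obtain ⟨w, hw, rfl⟩ := Finset.mem_image.1 hO
    obtain ⟨hl, hf⟩ := mem_Wk.1 hw
    obtain ⟨i, hi⟩ := factor_eq_win hf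
    rw [hl] at hi
    exact ⟨i, by rw [← hi]⟩
  set m : Finset (List A) → ℕ := fun O => sInf {i | orb θ₁ θ₂ (win u n i) = O}
    with hmdef
  have hmO : ∀ O ∈ Vv, orb θ₁ θ₂ (win u n (m O)) = O :=
    fun O hO => Nat.sInf_mem (hpos O hO)
  have hmle : ∀ (O) (i : ℕ), orb θ₁ θ₂ (win u n i) = O → m O ≤ i :=
    fun O i h => Nat.sInf_le h
  set root := orb θ₁ θ₂ (win u n 0) with hrootdef
  have hrootV : root ∈ Vv := Finset.mem_image_of_mem _ (win_mem_Wk u n 0)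
  have hm1 : ∀ O ∈ Vv.erase root, 1 ≤ m O := by
    intro O hO
    rcases Nat.eq_zero_or_pos (m O) with h0 | h
    · exfalso
      have hOV := Finset.mem_of_mem_erase hO
      have := hmO O hOV
      rw [h0] at this
      exact (Finset.ne_of_mem_erase hO) this.symm
    · exact h
  set ψ : Finset (List A) → Finset (List A) :=
    fun O => orb θ₁ θ₂ (win u (n+1) (m O - 1)) with hψdef
  -- ψ lands in S
  have hψS : ∀ O ∈ Vv.erase root, ψ O ∈ S := by
    intro O hO
    have hOV := Finset.mem_of_mem_erase hO
    have h1m := hm1 O hO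
    have hi1 : (m O - 1) + 1 = m O := by omega
    rw [hSdef, Finset.mem_filter]
    constructor
    · exact Finset.mem_image_of_mem _ (win_mem_Wk u (n+1) (m O - 1))
    · rintro ⟨x, hx, hp⟩
      have hloop := pal_loop h₁ h₂ hcomm hx hp
      rw [hi1, hmO O hOV] at hloop
      have := hmle O (m O - 1) hloop
      omega
  -- injectivity of ψ
  have hψinj : ∀ O₁ ∈ Vv.erase root, ∀ O₂ ∈ Vv.erase root, ψ O₁ = ψ O₂ → O₁ = O₂ := by
    intro O₁ hO₁ O₂ hO₂ heq
    have hOV₁ := Finset.mem_of_mem_erase hO₁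
    have hOV₂ := Finset.mem_of_mem_erase hO₂
    have h1m₁ := hm1 O₁ hO₁
    have h1m₂ := hm1 O₂ hO₂
    set i := m O₁ - 1 with hidef
    set j := m O₂ - 1 with hjdef
    have hi1 : i + 1 = m O₁ := by omega
    have hj1 : j + 1 = m O₂ := by omega
    have heq' : orb θ₁ θ₂ (win u (n+1) i) = orb θ₁ θ₂ (win u (n+1) j) := heq
    have hx : win u (n+1) j ∈ orb θ₁ θ₂ (win u (n+1) i) := by
      rw [heq']; exact mem_orb_self _
    have hend := edge_endpoints h₁ h₂ hcomm hx
    rw [win_take, win_drop] at hend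
    rcases hend with ⟨hpar1, hpar2⟩ | ⟨hcr1, hcr2⟩
    · rw [hj1, hi1, hmO O₁ hOV₁, hmO O₂ hOV₂] at hpar2
      exact hpar2.symm
    · exfalso
      rw [hi1, hmO O₁ hOV₁] at hcr1
      rw [hj1, hmO O₂ hOV₂] at hcr2
      have hle1 := hmle O₁ j hcr1
      have hle2 := hmle O₂ i hcr2.symm
      omega
  -- hasB transfer
  have hψB : ∀ O ∈ Vv.erase root, hasB (ψ O) → O ∈ VB := by
    intro O hO hB
    have hOV := Finset.mem_of_mem_erase hO
    have h1m := hm1 O hO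
    have hi1 : (m O - 1) + 1 = m O := by omega
    obtain ⟨x, hx, hfx⟩ := hB
    have := phifix_edge h₁ h₂ hcomm hx hfx
    rw [hi1] at this
    rw [hVBdef, Finset.mem_filter]
    refine ⟨hOV, ⟨win u n (m O), ?_, this⟩⟩
    have h5 := hmO O hOV
    have h6 := mem_orb_self (θ₁ := θ₁) (θ₂ := θ₂) (win u n (m O))
    rwa [h5] at h6
  -- cardinalities
  set T := (Vv.erase root).image ψ with hTdef
  have hTS : T ⊆ S := by
    intro y hy
    obtain ⟨O, hO, rfl⟩ := Finset.mem_image.1 hy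
    exact hψS O hO
  have hTcard : T.card + 1 = Vv.card := by
    rw [hTdef, Finset.card_image_of_injOn (fun O hO O' hO' h => hψinj O hO O' hO' h),
      Finset.card_erase_of_mem hrootV]
    have : 1 ≤ Vv.card := Finset.card_pos.2 ⟨root, hrootV⟩
    omega
  have fact1 : Vv.card ≤ S.card + 1 := by
    have := Finset.card_le_card hTS
    omega
  have fact2 : Vv.card + EB.card ≤ S.card + VB.card + 1 := by
    have hsub : T ∪ (EB \ T) ⊆ S := by
      apply Finset.union_subset hTS
      intro y hy
      exact Finset.mem_of_mem_filter y (Finset.mem_sdiff.1 hy).1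
    have hdisj : Disjoint T (EB \ T) := Finset.disjoint_sdiff
    have hu : T.card + (EB \ T).card ≤ S.card := by
      rw [← Finset.card_union_of_disjoint hdisj]
      exact Finset.card_le_card hsub
    have hint : (EB ∩ T).card + (EB \ T).card = EB.card :=
      Finset.card_inter_add_card_sdiff EB T
    have hEBT : (EB ∩ T).card ≤ VB.card := by
      have hsub2 : EB ∩ T ⊆ ((Vv.erase root).filter (fun O => O ∈ VB)).image ψ := by
        intro y hy
        obtain ⟨hyEB, hyT⟩ := Finset.mem_inter.1 hy
        obtain ⟨O, hO, rfl⟩ := Finset.mem_image.1 hyT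
        have hOVB : O ∈ VB := hψB O hO (Finset.mem_filter.1 hyEB).2
        exact Finset.mem_image_of_mem _ (Finset.mem_filter.2 ⟨hO, hOVB⟩)
      calc (EB ∩ T).card ≤ (((Vv.erase root).filter (fun O => O ∈ VB)).image ψ).card :=
            Finset.card_le_card hsub2
        _ ≤ ((Vv.erase root).filter (fun O => O ∈ VB)).card := Finset.card_image_le
        _ ≤ VB.card := Finset.card_le_card (fun O hO => (Finset.mem_filter.1 hO).2)
    omega
  -- translate the complexity functions into Finset cardinalities
  have hCn : ∀ k, fC u k = (Wk u k).card := by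
    intro k
    rw [fC, Set.ncard_eq_toFinset_card _ (finite_fac u k)]
    rfl
  have hPal : ∀ (k : ℕ) (θ : A → A),
      fP u θ k = ((Wk u k).filter (fun w => antim θ w = w)).card := by
    intro k θ
    rw [fP]
    have hset : {w : List A | w.length = k ∧ IsFactor u w ∧ IsPalin θ w}
        = ↑((Wk u k).filter (fun w => antim θ w = w)) := by
      ext w
      simp only [Set.mem_setOf_eq, Finset.coe_filter, mem_Wk, IsPalin]
      tauto
    rw [hset, Set.ncard_coe_finset]
  have hP12 : ∀ (k : ℕ), fP2 u θ₁ θ₂ k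
      = ((Wk u k).filter (fun w => antim θ₁ w = w ∧ antim θ₂ w = w)).card := by
    intro k
    rw [fP2]
    have hset : {w : List A | w.length = k ∧ IsFactor u w ∧ IsPalin θ₁ w ∧ IsPalin θ₂ w}
        = ↑((Wk u k).filter (fun w => antim θ₁ w = w ∧ antim θ₂ w = w)) := by
      ext w
      simp only [Set.mem_setOf_eq, Finset.coe_filter, mem_Wk, IsPalin]
      tauto
    rw [hset, Set.ncard_coe_finset]
  -- per-orbit valuations
  have key2 : ∀ O ∈ Vv, ((O.card : ℤ)
      + ((O.filter (fun x => antim θ₁ x = x)).card : ℤ)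
      + ((O.filter (fun x => antim θ₂ x = x)).card : ℤ)
      - ((O.filter (fun x => antim θ₁ x = x ∧ antim θ₂ x = x)).card : ℤ))
      = if hasB O then 2 else 4 := by
    intro O hO
    obtain ⟨w, hw, rfl⟩ := Finset.mem_image.1 hO
    have hiff : hasB (orb θ₁ θ₂ w) ↔ MP θ₁ θ₂ w = w :=
      ⟨fun ⟨x, hx, hfx⟩ => (phifix_invar h₁ h₂ hcomm hx).1 hfx,
       fun h => ⟨w, mem_orb_self w, h⟩⟩
    rw [(orb_vals h₁ h₂ hcomm w).1]
    simp only [hiff]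
  have key1 : ∀ O ∈ Ee, ((O.card : ℤ)
      - ((O.filter (fun x => antim θ₁ x = x)).card : ℤ)
      - ((O.filter (fun x => antim θ₂ x = x)).card : ℤ)
      + ((O.filter (fun x => antim θ₁ x = x ∧ antim θ₂ x = x)).card : ℤ))
      = if hasP O then 0 else if hasB O then 2 else 4 := by
    intro O hO
    obtain ⟨w, hw, rfl⟩ := Finset.mem_image.1 hO
    have hiffB : hasB (orb θ₁ θ₂ w) ↔ MP θ₁ θ₂ w = w :=
      ⟨fun ⟨x, hx, hfx⟩ => (phifix_invar h₁ h₂ hcomm hx).1 hfx,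
       fun h => ⟨w, mem_orb_self w, h⟩⟩
    have hiffP : hasP (orb θ₁ θ₂ w) ↔ (antim θ₁ w = w ∨ antim θ₂ w = w) := by
      constructor
      · rintro ⟨x, hx, hp | hp⟩
        · exact Or.inl ((pal1_invar h₁ h₂ hcomm hx).1 hp)
        · exact Or.inr ((pal2_invar h₁ h₂ hcomm hx).1 hp)
      · intro hp
        exact ⟨w, mem_orb_self w, hp⟩
    rw [(orb_vals h₁ h₂ hcomm w).2]
    simp only [hiffB, hiffP]
  -- vertex-side counting
  have hsumV : (fC u n : ℤ) + fP u θ₁ n + fP u θ₂ n - fP2 u θ₁ θ₂ n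
      = ∑ O ∈ Vv, ((O.card : ℤ)
        + ((O.filter (fun x => antim θ₁ x = x)).card : ℤ)
        + ((O.filter (fun x => antim θ₂ x = x)).card : ℤ)
        - ((O.filter (fun x => antim θ₁ x = x ∧ antim θ₂ x = x)).card : ℤ)) := by
    have q1 : (Wk u n).card = ∑ O ∈ Vv, O.card := part_card h₁ h₂ hcomm _ hWnclosed
    have q2 : ((Wk u n).filter (fun w => antim θ₁ w = w)).card
        = ∑ O ∈ Vv, (O.filter (fun x => antim θ₁ x = x)).card :=
      part_sum h₁ h₂ hcomm _ hWnclosed _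
    have q3 : ((Wk u n).filter (fun w => antim θ₂ w = w)).card
        = ∑ O ∈ Vv, (O.filter (fun x => antim θ₂ x = x)).card :=
      part_sum h₁ h₂ hcomm _ hWnclosed _
    have q4 : ((Wk u n).filter (fun w => antim θ₁ w = w ∧ antim θ₂ w = w)).card
        = ∑ O ∈ Vv, (O.filter (fun x => antim θ₁ x = x ∧ antim θ₂ x = x)).card :=
      part_sum h₁ h₂ hcomm _ hWnclosed _
    rw [hCn, hPal n θ₁, hPal n θ₂, hP12 n, q1, q2, q3, q4]
    rw [Finset.sum_sub_distrib, Finset.sum_add_distrib, Finset.sum_add_distrib]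
    push_cast
    ring
  have hVval : ∑ O ∈ Vv, ((O.card : ℤ)
        + ((O.filter (fun x => antim θ₁ x = x)).card : ℤ)
        + ((O.filter (fun x => antim θ₂ x = x)).card : ℤ)
        - ((O.filter (fun x => antim θ₁ x = x ∧ antim θ₂ x = x)).card : ℤ))
      = ∑ O ∈ Vv, (if hasB O then (2:ℤ) else 4) := Finset.sum_congr rfl key2
  have hVsplit : ∑ O ∈ Vv, (if hasB O then (2:ℤ) else 4)
      = 2 * VB.card + 4 * NB.card := by
    rw [Finset.sum_ite, Finset.sum_const, Finset.sum_const, hVBdef, hNBdef]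
    push_cast
    ring
  have E2 : (fC u n : ℤ) + fP u θ₁ n + fP u θ₂ n - fP2 u θ₁ θ₂ n
      = 2 * VB.card + 4 * NB.card := by rw [hsumV, hVval, hVsplit]
  have E2b : VB.card + NB.card = Vv.card := by
    rw [hVBdef, hNBdef]
    exact Finset.card_filter_add_card_filter_not _
  -- edge-side counting
  have hsumE : (fC u (n+1) : ℤ) - fP u θ₁ (n+1) - fP u θ₂ (n+1) + fP2 u θ₁ θ₂ (n+1)
      = ∑ O ∈ Ee, ((O.card : ℤ)
        - ((O.filter (fun x => antim θ₁ x = x)).card : ℤ)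
        - ((O.filter (fun x => antim θ₂ x = x)).card : ℤ)
        + ((O.filter (fun x => antim θ₁ x = x ∧ antim θ₂ x = x)).card : ℤ)) := by
    have q1 : (Wk u (n+1)).card = ∑ O ∈ Ee, O.card := part_card h₁ h₂ hcomm _ hWeclosed
    have q2 : ((Wk u (n+1)).filter (fun w => antim θ₁ w = w)).card
        = ∑ O ∈ Ee, (O.filter (fun x => antim θ₁ x = x)).card :=
      part_sum h₁ h₂ hcomm _ hWeclosed _
    have q3 : ((Wk u (n+1)).filter (fun w => antim θ₂ w = w)).card
        = ∑ O ∈ Ee, (O.filter (fun x => antim θ₂ x = x)).card :=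
      part_sum h₁ h₂ hcomm _ hWeclosed _
    have q4 : ((Wk u (n+1)).filter (fun w => antim θ₁ w = w ∧ antim θ₂ w = w)).card
        = ∑ O ∈ Ee, (O.filter (fun x => antim θ₁ x = x ∧ antim θ₂ x = x)).card :=
      part_sum h₁ h₂ hcomm _ hWeclosed _
    rw [hCn, hPal (n+1) θ₁, hPal (n+1) θ₂, hP12 (n+1), q1, q2, q3, q4]
    rw [Finset.sum_add_distrib, Finset.sum_sub_distrib, Finset.sum_sub_distrib]
    push_cast
    ring
  have hEval : ∑ O ∈ Ee, ((O.card : ℤ)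
        - ((O.filter (fun x => antim θ₁ x = x)).card : ℤ)
        - ((O.filter (fun x => antim θ₂ x = x)).card : ℤ)
        + ((O.filter (fun x => antim θ₁ x = x ∧ antim θ₂ x = x)).card : ℤ))
      = ∑ O ∈ Ee, (if hasP O then (0:ℤ) else if hasB O then 2 else 4) :=
    Finset.sum_congr rfl key1
  have hEfilter : ∑ O ∈ Ee, (if hasP O then (0:ℤ) else if hasB O then 2 else 4)
      = ∑ O ∈ S, (if hasB O then (2:ℤ) else 4) := by
    rw [hSdef, Finset.sum_filter]
    apply Finset.sum_congr rfl
    intro O hO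
    by_cases h : hasP O <;> simp [h]
  have hEsplit : ∑ O ∈ S, (if hasB O then (2:ℤ) else 4)
      = 2 * EB.card + 4 * NS.card := by
    rw [Finset.sum_ite, Finset.sum_const, Finset.sum_const, hEBdef, hNSdef]
    push_cast
    ring
  have E1 : (fC u (n+1) : ℤ) - fP u θ₁ (n+1) - fP u θ₂ (n+1) + fP2 u θ₁ θ₂ (n+1)
      = 2 * EB.card + 4 * NS.card := by rw [hsumE, hEval, hEfilter, hEsplit]
  have E1b : EB.card + NS.card = S.card := by
    rw [hEBdef, hNSdef]
    exact Finset.card_filter_add_card_filter_not _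
  omega
end

section
/- Let E be the antimorphism of {0,1}* defined by E(0) = 1 and E(1) = 0 (i.e., E reverses a word and exchanges the letters 0 and 1). The E-palindromic complexity of the Thue-Morse word u_TM satisfies: P_E(0) = 1; P_E(2) = 2; P_E(n) = 0 for all odd n; P_E(n) = 4 for even n with (1/2)·4^k < n ≤ (3/2)·4^k for some k ≥ 1; and P_E(n) = 2 for even n with (3/2)·4^k < n ≤ (1/2)·4^{k+1} for some k ≥ 1. -/
open scoped Classical

/-- The Thue-Morse word over `{0,1}` (`false = 0`, `true = 1`): its `n`-th letter is
the parity of the sum of binary digits of `n`. -/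
def tm : ℕ → Bool := fun n => (Nat.digits 2 n).sum % 2 == 1

lemma tm0 : tm 0 = false := by simp [tm]
lemma tmE (n : ℕ) : tm (2*n) = tm n := by
  rcases Nat.eq_zero_or_pos n with h | h
  · simp [h]
  · unfold tm
    rw [Nat.digits_def' (by norm_num) (by omega)]
    simp [Nat.mul_div_cancel_left, Nat.mul_mod_right]
lemma tmO (n : ℕ) : tm (2*n+1) = !tm n := by
  unfold tm
  rw [Nat.digits_def' (b := 2) (by norm_num) (by omega)]
  have h1 : (2*n+1) % 2 = 1 := by omega
  have h2 : (2*n+1) / 2 = n := by omega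
  rw [h1, h2, List.sum_cons]
  rcases Nat.mod_two_eq_zero_or_one (Nat.digits 2 n).sum with h | h <;>
    simp [Nat.add_mod, h]

lemma tm1 : tm 1 = true := by rw [show (1:ℕ) = 2*0+1 by rfl, tmO, tm0]; rfl
lemma tm2 : tm 2 = true := by rw [show (2:ℕ) = 2*1 by rfl, tmE, tm1]
lemma tm3 : tm 3 = false := by rw [show (3:ℕ) = 2*1+1 by rfl, tmO, tm1]; rfl
lemma tm4 : tm 4 = true := by rw [show (4:ℕ) = 2*2 by rfl, tmE, tm2]
lemma tm5 : tm 5 = false := by rw [show (5:ℕ) = 2*2+1 by rfl, tmO, tm2]; rfl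
lemma tm6 : tm 6 = false := by rw [show (6:ℕ) = 2*3 by rfl, tmE, tm3]
lemma tm7 : tm 7 = true := by rw [show (7:ℕ) = 2*3+1 by rfl, tmO, tm3]; rfl
lemma tm8 : tm 8 = true := by rw [show (8:ℕ) = 2*4 by rfl, tmE, tm4]
lemma tm9 : tm 9 = false := by rw [show (9:ℕ) = 2*4+1 by rfl, tmO, tm4]; rfl
lemma tm10 : tm 10 = false := by rw [show (10:ℕ) = 2*5 by rfl, tmE, tm5]
lemma tm11 : tm 11 = true := by rw [show (11:ℕ) = 2*5+1 by rfl, tmO, tm5]; rfl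

/-- Substitution lemma. -/
lemma sl : ∀ V q t : ℕ, t < 2^V → tm (2^V * q + t) = xor (tm q) (tm t) := by
  intro V
  induction V with
  | zero => intro q t ht; interval_cases t; simp [tm0]
  | succ V ih =>
    intro q t ht
    rcases Nat.even_or_odd t with ⟨c, hc⟩ | ⟨c, hc⟩
    · have h1 : 2^(V+1) * q + t = 2*(2^V * q + c) := by rw [hc]; ring
      have h2 : c < 2^V := by subst hc; rw [pow_succ] at ht; omega
      rw [h1, tmE, ih q c h2, hc, show c+c = 2*c by ring, tmE]
    · have h1 : 2^(V+1) * q + t = 2*(2^V * q + c) + 1 := by rw [hc]; ring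
      have h2 : c < 2^V := by subst hc; rw [pow_succ] at ht; omega
      rw [h1, tmO, ih q c h2, hc, tmO]
      cases tm q <;> cases tm c <;> rfl

lemma pow4 (v : ℕ) : (4:ℕ)^v = 2^(2*v) := by rw [show (4:ℕ) = 2^2 by rfl, ← pow_mul]

/-- Convenient form: `tm (q·4^K + t) = tm q xor tm t` for `t < 4^K`. -/
lemma slQ (K q t : ℕ) (ht : t < 4^K) : tm (4^K * q + t) = xor (tm q) (tm t) := by
  rw [pow4] at ht ⊢; exact sl _ q t ht

/-- Complement lemma: `tm (4^K - 1 - s) = tm s` for `s < 4^K`. -/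
lemma compl2 : ∀ V s : ℕ, s < 2^V → tm (2^V - 1 - s) = xor (tm s) (decide (V % 2 = 1)) := by
  intro V
  induction V with
  | zero => intro s hs; interval_cases s; simp
  | succ V ih =>
    intro s hs
    rcases Nat.even_or_odd s with ⟨c, hc⟩ | ⟨c, hc⟩
    · have h2 : c < 2^V := by subst hc; rw [pow_succ] at hs; omega
      have h1 : 2^(V+1) - 1 - s = 2*(2^V - 1 - c) + 1 := by
        rw [hc, pow_succ]; omega
      rw [h1, tmO, ih c h2, hc, show c+c=2*c by ring, tmE]
      rcases Nat.mod_two_eq_zero_or_one V with h | h <;>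
        simp [Nat.add_mod, h] <;> cases tm c <;> rfl
    · have h2 : c < 2^V := by subst hc; rw [pow_succ] at hs; omega
      have h1 : 2^(V+1) - 1 - s = 2*(2^V - 1 - c) := by
        rw [hc, pow_succ]; omega
      rw [h1, tmE, ih c h2, hc, tmO]
      rcases Nat.mod_two_eq_zero_or_one V with h | h <;>
        simp [Nat.add_mod, h] <;> cases tm c <;> rfl

lemma complQ (K s : ℕ) (hs : s < 4^K) : tm (4^K - 1 - s) = tm s := by
  rw [pow4] at hs ⊢
  rw [compl2 _ s hs]
  simp [Nat.mul_mod_right]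

/-- `tm (4^K + s) = !tm s` for `s < 4^K`. -/
lemma padd (K s : ℕ) (hs : s < 4^K) : tm (4^K + s) = !tm s := by
  have := slQ K 1 s hs
  rw [mul_one] at this
  rw [this, tm1]; cases tm s <;> rfl

/-- `tm (2·4^K + x) = !tm x` for `x < 2·4^K`. -/
lemma t2 (K x : ℕ) (hx : x < 2*4^K) : tm (2*4^K + x) = !tm x := by
  rcases Nat.lt_or_ge x (4^K) with h | h
  · have := slQ K 2 x h
    rw [show 4^K*2 = 2*4^K by ring] at this
    rw [this, tm2]; cases tm x <;> rfl
  · obtain ⟨y, rfl⟩ : ∃ y, x = 4^K + y := ⟨x - 4^K, by omega⟩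
    have hy : y < 4^K := by omega
    have h3 : 2*4^K + (4^K + y) = 4^K*3 + y := by ring
    rw [h3, slQ K 3 _ hy, tm3, padd K _ hy]
    cases tm y <;> rfl

/-- `tm (3·4^K + z) = tm z` for `z < 2·4^K`. -/
lemma t3 (K z : ℕ) (hz : z < 2*4^K) : tm (3*4^K + z) = tm z := by
  rcases Nat.lt_or_ge z (4^K) with h | h
  · have := slQ K 3 z h
    rw [show 4^K*3 = 3*4^K by ring] at this
    rw [this, tm3]; cases tm z <;> rfl
  · obtain ⟨y, rfl⟩ : ∃ y, z = 4^K + y := ⟨z - 4^K, by omega⟩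
    have hy : y < 4^K := by omega
    have h3 : 3*4^K + (4^K + y) = 4^K*4 + y := by ring
    rw [h3, slQ K 4 _ hy, tm4, padd K _ hy]
    cases tm y <;> rfl

/-- Shift lemma: `tm (4^(K+w) - 4^K + x) = tm x` for `x < 2·4^K`. -/
lemma tshift (K : ℕ) : ∀ w x : ℕ, x < 2*4^K → tm (4^(K+w) - 4^K + x) = tm x := by
  intro w
  induction w with
  | zero => intro x hx; simp
  | succ w ih =>
    intro x hx
    have hp : (4:ℕ)^K ≤ 4^(K+w) := Nat.pow_le_pow_right (by norm_num) (by omega)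
    have hz : 4^(K+w) - 4^K + x < 2*4^(K+w) := by omega
    have harith : 4^(K+(w+1)) - 4^K + x = 3*4^(K+w) + (4^(K+w) - 4^K + x) := by
      have : (4:ℕ)^(K+(w+1)) = 4*4^(K+w) := by ring
      omega
    rw [harith, t3 _ _ hz, ih x hx]

/-- Antipalindromic radius: the word of length `2m` centered at the boundary before
position `c` is an `E`-palindrome. -/
def Rad (c m : ℕ) : Prop := m ≤ c ∧ ∀ j < m, tm (c-1-j) = !tm (c+j)

lemma rad_mono {c m m' : ℕ} (h : Rad c m) (hm : m' ≤ m) : Rad c m' :=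
  ⟨le_trans hm h.1, fun j hj => h.2 j (lt_of_lt_of_le hj hm)⟩

/-- No three consecutive equal letters (weak form). -/
lemma consec (g : ℕ) : tm (2*g) ≠ tm (2*g+1) := by
  rw [tmO, tmE]; cases tm g <;> simp

lemma L0 (f : ℕ) : ¬(tm f = tm (f+1) ∧ tm (f+1) = tm (f+2)) := by
  rintro ⟨h1, h2⟩
  rcases Nat.even_or_odd f with ⟨g, hg⟩ | ⟨g, hg⟩
  · exact consec g (by rw [← show 2*g = f by omega] at h1; exact h1)
  · refine consec (g+1) ?_
    rw [show 2*(g+1) = f+1 by omega, show f+1+1 = f+2 by omega]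
    exact h2

/-- Radius at an odd center is less than 4. -/
lemma L2 (d : ℕ) : ¬ Rad (2*d+1) 4 := by
  rintro ⟨hc, h⟩
  have hd : 2 ≤ d := by omega
  have h1 := h 1 (by norm_num)
  have h3 := h 3 (by norm_num)
  rw [show 2*d+1-1-1 = 2*(d-1)+1 by omega, show 2*d+1+1 = 2*(d+1) by omega, tmO, tmE] at h1
  rw [show 2*d+1-1-3 = 2*(d-2)+1 by omega, show 2*d+1+3 = 2*(d+2) by omega, tmO, tmE] at h3
  have e1 : tm (d-1) = tm (d+1) := by
    cases hh : tm (d+1) <;> rw [hh] at h1 <;> simpa using h1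
  have e3 : tm (d-2) = tm (d+2) := by
    cases hh : tm (d+2) <;> rw [hh] at h3 <;> simpa using h3
  rcases Nat.even_or_odd d with ⟨e, he⟩ | ⟨e, he⟩
  · have he1 : 1 ≤ e := by omega
    rw [show d-1 = 2*(e-1)+1 by omega, show d+1 = 2*e+1 by omega, tmO, tmO] at e1
    rw [show d-2 = 2*(e-1) by omega, show d+2 = 2*(e+1) by omega, tmE, tmE] at e3
    have q1 : tm (e-1) = tm e := by
      cases hh : tm e <;> rw [hh] at e1 <;> simpa using e1
    refine L0 (e-1) ⟨by rw [show e-1+1 = e by omega]; exact q1, ?_⟩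
    rw [show e-1+1 = e by omega, show e-1+2 = e+1 by omega]
    rw [← e3, q1]
  · have he1 : 1 ≤ e := by omega
    rw [show d-1 = 2*e by omega, show d+1 = 2*(e+1) by omega, tmE, tmE] at e1
    rw [show d-2 = 2*(e-1)+1 by omega, show d+2 = 2*(e+1)+1 by omega, tmO, tmO] at e3
    have q3 : tm (e-1) = tm (e+1) := by
      cases hh : tm (e+1) <;> rw [hh] at e3 <;> simpa using e3
    refine L0 (e-1) ⟨?_, ?_⟩
    · rw [show e-1+1 = e by omega, q3, ← e1]
    · rw [show e-1+1 = e by omega, show e-1+2 = e+1 by omega]; exact e1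

/-- No antipalindrome centered at `c ≡ 2 (mod 4)`. -/
lemma L4 (e : ℕ) : ¬ Rad (2*(2*e+1)) 1 := by
  rintro ⟨hc, h⟩
  have h0 := h 0 (by norm_num)
  rw [show 2*(2*e+1)-1-0 = 2*(2*e)+1 by omega, show 2*(2*e+1)+0 = 2*(2*e+1) by omega,
    tmO, tmE, tmE, tmO] at h0
  cases tm e <;> simp at h0

/-- Descent step. -/
lemma desc1 {c m : ℕ} (m' : ℕ) (hm : 4*m' ≤ m + 3) (h : Rad (4*c) m) : Rad c m' := by
  obtain ⟨hc, h⟩ := h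
  constructor
  · omega
  · intro j hj
    have hj4 : 4*j < m := by omega
    have hjc : j < c := by omega
    have := h (4*j) hj4
    rw [show 4*c-1-4*j = 2*(2*(c-1-j)+1)+1 by omega, show 4*c+4*j = 2*(2*(c+j)) by omega,
      tmO, tmO, tmE, tmE] at this
    cases hh : tm (c+j) <;> rw [hh] at this <;> simpa using this

lemma descA (q : ℕ) : ∀ v m : ℕ, 4^v < m → Rad (4^v*q) m → Rad q 2 := by
  intro v
  induction v with
  | zero => intro m hm h; rw [pow_zero, one_mul] at h; exact rad_mono h (by omega)
  | succ v ih =>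
    intro m hm h
    have h4 : (4:ℕ)^(v+1) = 4*4^v := by ring
    rw [h4, mul_assoc] at h
    refine ih (4^v+1) (by omega) (desc1 (4^v+1) (by omega) h)

lemma descB (q : ℕ) : ∀ v m : ℕ, 3*4^v < m → Rad (4^v*q) m → Rad q 4 := by
  intro v
  induction v with
  | zero => intro m hm h; rw [pow_zero, one_mul] at h; exact rad_mono h (by omega)
  | succ v ih =>
    intro m hm h
    have h4 : (4:ℕ)^(v+1) = 4*4^v := by ring
    rw [h4, mul_assoc] at h
    refine ih (3*4^v+1) (by omega) (desc1 (3*4^v+1) (by omega) h)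

/-- Every center of a nonempty antipalindrome is of the form `4^v·(2d+1)`. -/
lemma form : ∀ c : ℕ, 1 ≤ c → Rad c 1 → ∃ v d, c = 4^v * (2*d+1) := by
  intro c
  induction c using Nat.strong_induction_on with
  | _ c ih =>
    intro hc h
    rcases Nat.even_or_odd c with ⟨e, he⟩ | ⟨d, hd⟩
    · rcases Nat.even_or_odd e with ⟨f, hf⟩ | ⟨f, hf⟩
      · -- c = 4f
        have hf4 : c = 4*f := by omega
        have hf1 : 1 ≤ f := by omega
        obtain ⟨v, d, hvd⟩ := ih f (by omega) hf1 (desc1 1 (by omega) (hf4 ▸ h))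
        exact ⟨v+1, d, by rw [hf4, hvd]; ring⟩
      · exact absurd (show Rad (2*(2*f+1)) 1 by rw [show 2*(2*f+1) = c by omega]; exact h)
          (L4 f)
    · exact ⟨0, d, by omega⟩

/-- Rad at odd center of radius ≥ 2 gives the letter conditions. -/
lemma oddCond (d : ℕ) (h : Rad (2*d+1) 2) :
    1 ≤ d ∧ tm (d-1) = tm (d+1) ∧ tm d = !tm (d-1) := by
  obtain ⟨hc, hh⟩ := h
  have hd : 1 ≤ d := by omega
  have h1 := hh 1 (by norm_num)
  rw [show 2*d+1-1-1 = 2*(d-1)+1 by omega, show 2*d+1+1 = 2*(d+1) by omega, tmO, tmE] at h1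
  have e1 : tm (d-1) = tm (d+1) := by
    cases hg : tm (d+1) <;> rw [hg] at h1 <;> simpa using h1
  refine ⟨hd, e1, ?_⟩
  by_contra hne
  have : tm d = tm (d-1) := by
    cases hg : tm (d-1) <;> cases hg2 : tm d <;> simp [hg, hg2] at hne ⊢
  exact L0 (d-1) ⟨by rw [show d-1+1 = d by omega]; exact this.symm,
    by rw [show d-1+1 = d by omega, show d-1+2 = d+1 by omega, this, e1]⟩

/-- Structure theorem for antipalindrome centers. -/
lemma struct (k m c : ℕ) (hk : 1 ≤ k) (h1 : 4^(k-1) < m) (h2 : m ≤ 4^k) (hr : Rad c m) :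
    ∃ v d, c = 4^v * (2*d+1) ∧
      (k ≤ v ∨ (v = k-1 ∧ m ≤ 3*4^(k-1) ∧ 1 ≤ d ∧ tm (d-1) = tm (d+1) ∧
        tm d = !tm (d-1))) := by
  have hm2 : (1:ℕ) ≤ 4^(k-1) := Nat.one_le_pow _ _ (by norm_num)
  have hm1 : 1 ≤ m := by omega
  obtain ⟨v, d, hvd⟩ := form c (le_trans (by omega) hr.1) (rad_mono hr (by omega))
  refine ⟨v, d, hvd, ?_⟩
  rcases Nat.lt_or_ge v k with hv | hv
  · right
    have hvk : v ≤ k-1 := by omega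
    rcases Nat.lt_or_ge v (k-1) with hv2 | hv2
    · -- v ≤ k-2 : contradiction
      exfalso
      have hx : 3*4^v < m := by
        have : (4:ℕ)^(v+1) ≤ 4^(k-1) := Nat.pow_le_pow_right (by norm_num) (by omega)
        have h4 : (4:ℕ)^(v+1) = 4*4^v := by ring
        omega
      exact L2 d (descB _ v m hx (hvd ▸ hr))
    · have hveq : v = k-1 := by omega
      have hpow : (4:ℕ)^v = 4^(k-1) := by rw [hveq]
      have hr2 : Rad (2*d+1) 2 := descA _ v m (by omega) (hvd ▸ hr)
      obtain ⟨hd, e1, e2⟩ := oddCond d hr2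
      refine ⟨hveq, ?_, hd, e1, e2⟩
      by_contra hm3
      exact L2 d (descB _ v m (by omega) (hvd ▸ hr))
  · left; exact hv


def word (i n : ℕ) : List Bool := (List.range n).map fun j => tm (i + j)

@[simp] lemma word_length (i n : ℕ) : (word i n).length = n := by simp [word]

lemma word_get (i n j : ℕ) (h : j < n) :
    (word i n)[j]'(by simpa using h) = tm (i + j) := by
  simp [word]

lemma word_eq_iff {i i' n : ℕ} :
    word i n = word i' n ↔ ∀ j < n, tm (i + j) = tm (i' + j) := by
  constructor
  · intro h j hj
    have := congrArg (fun l : List Bool => l[j]?) h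
    simpa [word, List.getElem?_map, List.getElem?_range, hj] using this
  · intro h
    apply List.map_congr_left
    intro a ha
    exact h a (List.mem_range.mp ha)

lemma factor_iff {w : List Bool} {n : ℕ} :
    (w.length = n ∧ IsFactor tm w) ↔ ∃ i, w = word i n := by
  constructor
  · rintro ⟨hl, i, ho⟩
    exact ⟨i, by rw [ho, hl]; rfl⟩
  · rintro ⟨i, rfl⟩
    exact ⟨by simp, i, by simp [OccursAt, word]⟩

lemma palin_iff {i n : ℕ} :
    IsPalin Bool.not (word i n) ↔ ∀ j < n, tm (i + (n - 1 - j)) = !tm (i + j) := by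
  unfold IsPalin antim
  constructor
  · intro h j hj
    have := congrArg (fun l : List Bool => l[j]?) h
    simp only [word, List.map_map] at this
    rw [List.getElem?_reverse (by simpa using hj), List.getElem?_map] at this
    simp only [List.length_map, List.length_range] at this
    rw [List.getElem?_map, List.getElem?_range (by omega), List.getElem?_range hj] at this
    simp only [Function.comp, Option.map_some] at this
    have h2 := Option.some.inj this
    cases hg : tm (i + j) <;> rw [hg] at h2 <;> simp at h2 <;> simp [h2]
  · intro h
    apply List.ext_getElem
    · simp
    · intro j h1 h2
      rw [List.getElem_reverse]
      simp only [word, List.map_map, List.length_map, List.length_range] at h1 h2 ⊢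
      rw [List.getElem_map, List.getElem_map, List.getElem_range, List.getElem_range]
      simp only [Function.comp]
      rw [h j h2]
      simp

lemma bool_flip {a b : Bool} (h : a = !b) : b = !a := by cases b <;> simp_all

lemma palin_of_rad {c m : ℕ} (h : Rad c m) : IsPalin Bool.not (word (c-m) (2*m)) := by
  obtain ⟨hc, hh⟩ := h
  rw [palin_iff]
  intro j hj
  rcases Nat.lt_or_ge j m with hjm | hjm
  · have e1 : c-m + (2*m-1-j) = c + (m-1-j) := by omega
    have e2 : c-m + j = c-1-(m-1-j) := by omega
    rw [e1, e2]
    exact bool_flip (hh (m-1-j) (by omega))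
  · have e1 : c-m + (2*m-1-j) = c-1-(j-m) := by omega
    have e2 : c-m + j = c + (j-m) := by omega
    rw [e1, e2]
    exact hh (j-m) (by omega)

lemma rad_of_palin {i m : ℕ} (h : IsPalin Bool.not (word i (2*m))) : Rad (i+m) m := by
  rw [palin_iff] at h
  refine ⟨by omega, fun s hs => ?_⟩
  have := h (m+s) (by omega)
  rw [show i + (2*m-1-(m+s)) = i+m-1-s by omega] at this
  rw [show i+m+s = i + (m+s) by omega]
  exact this

lemma radB0 (K m : ℕ) (hm : m ≤ 4^K) : Rad (4^K) m := by
  refine ⟨hm, fun s hs => ?_⟩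
  rw [padd K s (by omega), complQ K s (by omega)]
  simp

lemma radB1 (K m : ℕ) (hm : m ≤ 4^K) : Rad (3*4^K) m := by
  refine ⟨by omega, fun s hs => ?_⟩
  have hs4 : s < 4^K := by omega
  rw [show 3*4^K - 1 - s = 2*4^K + (4^K - 1 - s) by omega, t2 K _ (by omega),
    complQ K s hs4, show 3*4^K + s = 3*4^K + s from rfl, t3 K s (by omega)]

lemma radA7 (K m : ℕ) (hm : m ≤ 3*4^K) : Rad (7*4^K) m := by
  have hQ : (1:ℕ) ≤ 4^K := Nat.one_le_pow _ _ (by norm_num)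
  refine ⟨by omega, fun s hs => ?_⟩
  rcases Nat.lt_or_ge s (4^K) with h1 | h1
  · rw [show 7*4^K - 1 - s = 4^K*6 + (4^K - 1 - s) by omega,
      slQ K 6 _ (by omega), tm6, show 7*4^K + s = 4^K*7 + s by ring,
      slQ K 7 _ h1, tm7, complQ K s h1]
    cases tm s <;> rfl
  rcases Nat.lt_or_ge s (2*4^K) with h2 | h2
  · obtain ⟨y, rfl⟩ : ∃ y, s = 4^K + y := ⟨s - 4^K, by omega⟩
    have hy : y < 4^K := by omega
    rw [show 7*4^K - 1 - (4^K+y) = 4^K*5 + (4^K - 1 - y) by omega,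
      slQ K 5 _ (by omega), tm5, show 7*4^K + (4^K+y) = 4^K*8 + y by ring,
      slQ K 8 _ hy, tm8, complQ K y hy]
    cases tm y <;> rfl
  · obtain ⟨y, rfl⟩ : ∃ y, s = 2*4^K + y := ⟨s - 2*4^K, by omega⟩
    have hy : y < 4^K := by omega
    rw [show 7*4^K - 1 - (2*4^K+y) = 4^K*4 + (4^K - 1 - y) by omega,
      slQ K 4 _ (by omega), tm4, show 7*4^K + (2*4^K+y) = 4^K*9 + y by ring,
      slQ K 9 _ hy, tm9, complQ K y hy]
    cases tm y <;> rfl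

lemma radA9 (K m : ℕ) (hm : m ≤ 3*4^K) : Rad (9*4^K) m := by
  have hQ : (1:ℕ) ≤ 4^K := Nat.one_le_pow _ _ (by norm_num)
  refine ⟨by omega, fun s hs => ?_⟩
  rcases Nat.lt_or_ge s (4^K) with h1 | h1
  · rw [show 9*4^K - 1 - s = 4^K*8 + (4^K - 1 - s) by omega,
      slQ K 8 _ (by omega), tm8, show 9*4^K + s = 4^K*9 + s by ring,
      slQ K 9 _ h1, tm9, complQ K s h1]
    cases tm s <;> rfl
  rcases Nat.lt_or_ge s (2*4^K) with h2 | h2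
  · obtain ⟨y, rfl⟩ : ∃ y, s = 4^K + y := ⟨s - 4^K, by omega⟩
    have hy : y < 4^K := by omega
    rw [show 9*4^K - 1 - (4^K+y) = 4^K*7 + (4^K - 1 - y) by omega,
      slQ K 7 _ (by omega), tm7, show 9*4^K + (4^K+y) = 4^K*10 + y by ring,
      slQ K 10 _ hy, tm10, complQ K y hy]
    cases tm y <;> rfl
  · obtain ⟨y, rfl⟩ : ∃ y, s = 2*4^K + y := ⟨s - 2*4^K, by omega⟩
    have hy : y < 4^K := by omega
    rw [show 9*4^K - 1 - (2*4^K+y) = 4^K*6 + (4^K - 1 - y) by omega,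
      slQ K 6 _ (by omega), tm6, show 9*4^K + (2*4^K+y) = 4^K*11 + y by ring,
      slQ K 11 _ hy, tm11, complQ K y hy]
    cases tm y <;> rfl

lemma pow2v1 (v : ℕ) : (2:ℕ)^(2*v+1) = 2*4^v := by
  rw [pow4, ← pow_succ']

/-- B-case letter computation. -/
lemma wordB_letter (v k d m j : ℕ) (hk : k ≤ v) (hm1 : 1 ≤ m) (hm : m ≤ 4^k)
    (hj : j < 2*m) :
    tm (4^v*(2*d+1) - m + j) = xor (tm d) (tm (4^k - m + j)) := by
  have hkv : (4:ℕ)^k ≤ 4^v := Nat.pow_le_pow_right (by norm_num) hk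
  have e1 : 4^v*(2*d+1) - m + j = 2^(2*v+1)*d + (4^v - m + j) := by
    rw [pow2v1]
    have : 4^v*(2*d+1) = 2*4^v*d + 4^v := by ring
    omega
  rw [e1, sl (2*v+1) d _ (by rw [pow2v1]; omega)]
  congr 1
  have e2 : 4^v - m + j = 4^(k + (v-k)) - 4^k + (4^k - m + j) := by
    rw [show k + (v-k) = v by omega]
    omega
  rw [e2, tshift k (v-k) _ (by omega)]

lemma wordB_eq_false (v k d m : ℕ) (hk : k ≤ v) (hm1 : 1 ≤ m) (hm : m ≤ 4^k)
    (hd : tm d = false) :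
    word (4^v*(2*d+1) - m) (2*m) = word (4^k - m) (2*m) := by
  rw [word_eq_iff]
  intro j hj
  rw [wordB_letter v k d m j hk hm1 hm hj, hd]
  simp

lemma wordB_eq_true (v k d m : ℕ) (hk : k ≤ v) (hm1 : 1 ≤ m) (hm : m ≤ 4^k)
    (hd : tm d = true) :
    word (4^v*(2*d+1) - m) (2*m) = word (3*4^k - m) (2*m) := by
  rw [word_eq_iff]
  intro j hj
  rw [wordB_letter v k d m j hk hm1 hm hj, hd]
  have e3 : 3*4^k - m + j = 2*4^k + (4^k - m + j) := by omega
  rw [e3, t2 k _ (by omega)]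
  simp

/-- A-case letter computation. -/
lemma wordA_letter (K d m j : ℕ) (hd : 1 ≤ d) (he1 : tm (d-1) = tm (d+1))
    (he2 : tm d = !tm (d-1)) (hm1 : 1 ≤ m) (hm : m ≤ 3*4^K) (hj : j < 2*m) :
    tm (4^K*(2*d+1) - m + j) = xor (tm (d-1)) (tm (9*4^K - m + j)) := by
  have hQ : (1:ℕ) ≤ 4^K := Nat.one_le_pow _ _ (by norm_num)
  obtain ⟨e, rfl⟩ : ∃ e, d = e+1 := ⟨d-1, by omega⟩
  simp only [Nat.add_sub_cancel] at he1 he2 ⊢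
  obtain ⟨β, t₀, hβb, ht₀b, hdm⟩ :
      ∃ β t₀, β < 6 ∧ t₀ < 4^K ∧ 3*4^K - m + j = 4^K*β + t₀ := by
    refine ⟨(3*4^K - m + j) / 4^K, (3*4^K - m + j) % 4^K, ?_, Nat.mod_lt _ (by omega), ?_⟩
    · exact Nat.div_lt_of_lt_mul (by omega)
    · exact (Nat.div_add_mod _ _).symm
  have r1 : (4:ℕ)^K*(2*(e+1)+1) = 4^K*(2*e) + 3*4^K := by ring
  have r2 : (4:ℕ)^K*(2*e+β) = 4^K*(2*e) + 4^K*β := by ring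
  have r3 : (4:ℕ)^K*(6+β) = 6*4^K + 4^K*β := by ring
  have e1 : 4^K*(2*(e+1)+1) - m + j = 4^K*(2*e+β) + t₀ := by rw [r1, r2]; omega
  have e9 : 9*4^K - m + j = 4^K*(6+β) + t₀ := by rw [r3]; omega
  rw [e1, e9, slQ K _ _ ht₀b, slQ K _ _ ht₀b]
  have hseed : tm (2*e+β) = xor (tm e) (tm (6+β)) := by
    interval_cases β
    · rw [show 2*e+0 = 2*e by ring, tmE, tm6]
      simp
    · rw [tmO, tm7]
      cases tm e <;> rfl
    · rw [show 2*e+2 = 2*(e+1) by omega, tmE, tm8, he2]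
      cases tm e <;> rfl
    · rw [show 2*e+3 = 2*(e+1)+1 by omega, tmO, tm9, he2]
      cases tm e <;> rfl
    · rw [show 2*e+4 = 2*(e+1+1) by omega, tmE, ← he1, tm10]
      cases tm e <;> rfl
    · rw [show 2*e+5 = 2*(e+1+1)+1 by omega, tmO, ← he1, tm11]
      cases tm e <;> rfl
  rw [hseed]
  cases tm e <;> cases tm (6+β) <;> cases tm t₀ <;> rfl

lemma wordA79 (K m j : ℕ) (hm1 : 1 ≤ m) (hm : m ≤ 3*4^K) (hj : j < 2*m) :
    tm (7*4^K - m + j) = !tm (9*4^K - m + j) := by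
  have hQ : (1:ℕ) ≤ 4^K := Nat.one_le_pow _ _ (by norm_num)
  obtain ⟨β, t₀, hβb, ht₀b, hdm⟩ :
      ∃ β t₀, β < 6 ∧ t₀ < 4^K ∧ 3*4^K - m + j = 4^K*β + t₀ := by
    refine ⟨(3*4^K - m + j) / 4^K, (3*4^K - m + j) % 4^K, ?_, Nat.mod_lt _ (by omega), ?_⟩
    · exact Nat.div_lt_of_lt_mul (by omega)
    · exact (Nat.div_add_mod _ _).symm
  have r2 : (4:ℕ)^K*(4+β) = 4*4^K + 4^K*β := by ring
  have r3 : (4:ℕ)^K*(6+β) = 6*4^K + 4^K*β := by ring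
  have e7 : 7*4^K - m + j = 4^K*(4+β) + t₀ := by rw [r2]; omega
  have e9 : 9*4^K - m + j = 4^K*(6+β) + t₀ := by rw [r3]; omega
  rw [e7, e9, slQ K _ _ ht₀b, slQ K _ _ ht₀b]
  have : tm (4+β) = !tm (6+β) := by
    interval_cases β <;>
      simp [show (4:ℕ)+0 = 4 from rfl, show (4:ℕ)+1 = 5 from rfl, show (4:ℕ)+2 = 6 from rfl,
        show (4:ℕ)+3 = 7 from rfl, show (4:ℕ)+4 = 8 from rfl, show (4:ℕ)+5 = 9 from rfl,
        show (6:ℕ)+0 = 6 from rfl, show (6:ℕ)+1 = 7 from rfl, show (6:ℕ)+2 = 8 from rfl,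
        show (6:ℕ)+3 = 9 from rfl, show (6:ℕ)+4 = 10 from rfl, show (6:ℕ)+5 = 11 from rfl,
        tm4, tm5, tm6, tm7, tm8, tm9, tm10, tm11]
  rw [this]
  cases tm (6+β) <;> cases tm t₀ <;> rfl

lemma wordA_eq_false (K d m : ℕ) (hd : 1 ≤ d) (he1 : tm (d-1) = tm (d+1))
    (he2 : tm d = !tm (d-1)) (hm1 : 1 ≤ m) (hm : m ≤ 3*4^K) (hE : tm (d-1) = false) :
    word (4^K*(2*d+1) - m) (2*m) = word (9*4^K - m) (2*m) := by
  rw [word_eq_iff]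
  intro j hj
  rw [wordA_letter K d m j hd he1 he2 hm1 hm hj, hE]
  simp

lemma wordA_eq_true (K d m : ℕ) (hd : 1 ≤ d) (he1 : tm (d-1) = tm (d+1))
    (he2 : tm d = !tm (d-1)) (hm1 : 1 ≤ m) (hm : m ≤ 3*4^K) (hE : tm (d-1) = true) :
    word (4^K*(2*d+1) - m) (2*m) = word (7*4^K - m) (2*m) := by
  rw [word_eq_iff]
  intro j hj
  rw [wordA_letter K d m j hd he1 he2 hm1 hm hj, hE, wordA79 K m j hm1 hm hj]
  simp

lemma tmQm1 (K : ℕ) : tm (4^K - 1) = false := by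
  have hQ : (1:ℕ) ≤ 4^K := Nat.one_le_pow _ _ (by norm_num)
  have := complQ K 0 (by omega)
  rw [show 4^K - 1 - 0 = 4^K - 1 by omega, tm0] at this
  exact this

lemma tmMul (K q : ℕ) (hq : tm q = b) : tm (q*4^K + (4^K - 1)) = b := by
  have hQ : (1:ℕ) ≤ 4^K := Nat.one_le_pow _ _ (by norm_num)
  rw [show q*4^K = 4^K*q by ring, slQ K q _ (by omega), tmQm1, hq]
  cases b <;> rfl

-- letter values at j = m-1 (index c - 1) and j = m-1-Q (index c-1-Q)
-- B0: center 4*Q (Q = 4^(k-1)); B1: center 12*Q; A7: 7Q; A9: 9Q.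
lemma distinct_letters (K : ℕ) :
    tm (4*4^K - 1) = false ∧ tm (12*4^K - 1) = true ∧
    tm (7*4^K - 1) = false ∧ tm (9*4^K - 1) = true ∧
    tm (4*4^K - 1 - 4^K) = true ∧ tm (12*4^K - 1 - 4^K) = false ∧
    tm (7*4^K - 1 - 4^K) = false ∧ tm (9*4^K - 1 - 4^K) = true := by
  have hQ : (1:ℕ) ≤ 4^K := Nat.one_le_pow _ _ (by norm_num)
  refine ⟨?_, ?_, ?_, ?_, ?_, ?_, ?_, ?_⟩
  · rw [show 4*4^K - 1 = 3*4^K + (4^K - 1) by omega, tmMul K 3 tm3]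
  · rw [show 12*4^K - 1 = 11*4^K + (4^K - 1) by omega, tmMul K 11 tm11]
  · rw [show 7*4^K - 1 = 6*4^K + (4^K - 1) by omega, tmMul K 6 tm6]
  · rw [show 9*4^K - 1 = 8*4^K + (4^K - 1) by omega, tmMul K 8 tm8]
  · rw [show 4*4^K - 1 - 4^K = 2*4^K + (4^K - 1) by omega, tmMul K 2 tm2]
  · rw [show 12*4^K - 1 - 4^K = 10*4^K + (4^K - 1) by omega, tmMul K 10 tm10]
  · rw [show 7*4^K - 1 - 4^K = 5*4^K + (4^K - 1) by omega, tmMul K 5 tm5]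
  · rw [show 9*4^K - 1 - 4^K = 7*4^K + (4^K - 1) by omega, tmMul K 7 tm7]

/-- Extract a letter disagreement from two canonical words. -/
lemma word_ne_of_letter {i1 i2 n j : ℕ} (hj : j < n) (hne : tm (i1+j) ≠ tm (i2+j)) :
    word i1 n ≠ word i2 n := by
  intro h
  exact hne (word_eq_iff.mp h j hj)

/-- The set of antipalindromic factors of length 2m, regime 4. -/
lemma main4 (k m : ℕ) (hk : 1 ≤ k) (h1 : 4^(k-1) < m) (h2 : m ≤ 3*4^(k-1)) :
    {w : List Bool | w.length = 2*m ∧ IsFactor tm w ∧ IsPalin Bool.not w} =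
    {word (4^k - m) (2*m), word (3*4^k - m) (2*m),
     word (7*4^(k-1) - m) (2*m), word (9*4^(k-1) - m) (2*m)} := by
  have hp : (4:ℕ)^k = 4^(k-1)*4 := by
    have := pow_succ 4 (k-1)
    rwa [Nat.sub_add_cancel hk] at this
  have hQ : (1:ℕ) ≤ 4^(k-1) := Nat.one_le_pow _ _ (by norm_num)
  ext w
  simp only [Set.mem_setOf_eq, Set.mem_insert_iff, Set.mem_singleton_iff]
  constructor
  · rintro ⟨hl, hf, hpal⟩
    obtain ⟨i, rfl⟩ := factor_iff.mp ⟨hl, hf⟩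
    have hrad := rad_of_palin hpal
    obtain ⟨v, d, hc, hcase⟩ := struct k m (i+m) hk h1 (by omega) hrad
    have hi : i = 4^v*(2*d+1) - m := by omega
    rcases hcase with hv | ⟨hv, _, hd, he1, he2⟩
    · -- B case
      cases htd : tm d
      · left
        rw [hi]
        exact wordB_eq_false v k d m hv (by omega) (by omega) htd
      · right; left
        rw [hi]
        exact wordB_eq_true v k d m hv (by omega) (by omega) htd
    · -- A case, v = k-1
      rw [hv] at hi
      cases htd : tm (d-1)
      · right; right; right
        rw [hi]
        exact wordA_eq_false (k-1) d m hd he1 he2 (by omega) (by omega) htd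
      · right; right; left
        rw [hi]
        exact wordA_eq_true (k-1) d m hd he1 he2 (by omega) (by omega) htd
  · have hfac : ∀ i : ℕ, IsFactor tm (word i (2*m)) := fun i => ⟨i, by simp [OccursAt, word]⟩
    rintro (rfl | rfl | rfl | rfl)
    · exact ⟨by simp, hfac _, palin_of_rad (radB0 k m (by omega))⟩
    · exact ⟨by simp, hfac _, palin_of_rad (radB1 k m (by omega))⟩
    · exact ⟨by simp, hfac _, palin_of_rad (radA7 (k-1) m (by omega))⟩
    · exact ⟨by simp, hfac _, palin_of_rad (radA9 (k-1) m (by omega))⟩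

/-- The set of antipalindromic factors of length 2m, regime 2. -/
lemma main2 (k m : ℕ) (hk : 1 ≤ k) (h1 : 3*4^(k-1) < m) (h2 : m ≤ 4^k) :
    {w : List Bool | w.length = 2*m ∧ IsFactor tm w ∧ IsPalin Bool.not w} =
    {word (4^k - m) (2*m), word (3*4^k - m) (2*m)} := by
  have hp : (4:ℕ)^k = 4^(k-1)*4 := by
    have := pow_succ 4 (k-1)
    rwa [Nat.sub_add_cancel hk] at this
  have hQ : (1:ℕ) ≤ 4^(k-1) := Nat.one_le_pow _ _ (by norm_num)
  ext w
  simp only [Set.mem_setOf_eq, Set.mem_insert_iff, Set.mem_singleton_iff]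
  constructor
  · rintro ⟨hl, hf, hpal⟩
    obtain ⟨i, rfl⟩ := factor_iff.mp ⟨hl, hf⟩
    have hrad := rad_of_palin hpal
    obtain ⟨v, d, hc, hcase⟩ := struct k m (i+m) hk (by omega) h2 hrad
    have hi : i = 4^v*(2*d+1) - m := by omega
    rcases hcase with hv | ⟨hv, hm3, _⟩
    · cases htd : tm d
      · left
        rw [hi]
        exact wordB_eq_false v k d m hv (by omega) h2 htd
      · right
        rw [hi]
        exact wordB_eq_true v k d m hv (by omega) h2 htd
    · omega
  · have hfac : ∀ i : ℕ, IsFactor tm (word i (2*m)) := fun i => ⟨i, by simp [OccursAt, word]⟩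
    rintro (rfl | rfl)
    · exact ⟨by simp, hfac _, palin_of_rad (radB0 k m h2)⟩
    · exact ⟨by simp, hfac _, palin_of_rad (radB1 k m h2)⟩

/-- Distinctness of the canonical words. -/
lemma distinct4 (k m : ℕ) (hk : 1 ≤ k) (h1 : 4^(k-1) < m) (h2 : m ≤ 3*4^(k-1)) :
    word (4^k - m) (2*m) ≠ word (3*4^k - m) (2*m) ∧
    word (4^k - m) (2*m) ≠ word (7*4^(k-1) - m) (2*m) ∧
    word (4^k - m) (2*m) ≠ word (9*4^(k-1) - m) (2*m) ∧
    word (3*4^k - m) (2*m) ≠ word (7*4^(k-1) - m) (2*m) ∧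
    word (3*4^k - m) (2*m) ≠ word (9*4^(k-1) - m) (2*m) ∧
    word (7*4^(k-1) - m) (2*m) ≠ word (9*4^(k-1) - m) (2*m) := by
  have hp : (4:ℕ)^k = 4^(k-1)*4 := by
    have := pow_succ 4 (k-1)
    rwa [Nat.sub_add_cancel hk] at this
  have hQ : (1:ℕ) ≤ 4^(k-1) := Nat.one_le_pow _ _ (by norm_num)
  obtain ⟨hB0, hB1, hA7, hA9, hB0', hB1', hA7', hA9'⟩ := distinct_letters (k-1)
  have j1 : m - 1 < 2*m := by omega
  have j2 : m - 1 - 4^(k-1) < 2*m := by omega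
  have eB0 : 4^k - m + (m-1) = 4*4^(k-1) - 1 := by omega
  have eB1 : 3*4^k - m + (m-1) = 12*4^(k-1) - 1 := by omega
  have eA7 : 7*4^(k-1) - m + (m-1) = 7*4^(k-1) - 1 := by omega
  have eA9 : 9*4^(k-1) - m + (m-1) = 9*4^(k-1) - 1 := by omega
  have fB0 : 4^k - m + (m-1-4^(k-1)) = 4*4^(k-1) - 1 - 4^(k-1) := by omega
  have fB1 : 3*4^k - m + (m-1-4^(k-1)) = 12*4^(k-1) - 1 - 4^(k-1) := by omega
  have fA7 : 7*4^(k-1) - m + (m-1-4^(k-1)) = 7*4^(k-1) - 1 - 4^(k-1) := by omega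
  have fA9 : 9*4^(k-1) - m + (m-1-4^(k-1)) = 9*4^(k-1) - 1 - 4^(k-1) := by omega
  refine ⟨word_ne_of_letter j1 ?_, word_ne_of_letter j2 ?_, word_ne_of_letter j1 ?_,
    word_ne_of_letter j1 ?_, word_ne_of_letter j2 ?_, word_ne_of_letter j1 ?_⟩
  · rw [eB0, eB1, hB0, hB1]; simp
  · rw [fB0, fA7, hB0', hA7']; simp
  · rw [eB0, eA9, hB0, hA9]; simp
  · rw [eB1, eA7, hB1, hA7]; simp
  · rw [fB1, fA9, hB1', hA9']; simp
  · rw [eA7, eA9, hA7, hA9]; simp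

lemma distinct2 (k m : ℕ) (hk : 1 ≤ k) (hm1 : 1 ≤ m) (h2 : m ≤ 4^k) :
    word (4^k - m) (2*m) ≠ word (3*4^k - m) (2*m) := by
  have hp : (4:ℕ)^k = 4^(k-1)*4 := by
    have := pow_succ 4 (k-1)
    rwa [Nat.sub_add_cancel hk] at this
  obtain ⟨hB0, hB1, _⟩ := distinct_letters (k-1)
  have j1 : m - 1 < 2*m := by omega
  have eB0 : 4^k - m + (m-1) = 4*4^(k-1) - 1 := by omega
  have eB1 : 3*4^k - m + (m-1) = 12*4^(k-1) - 1 := by omega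
  refine word_ne_of_letter j1 ?_
  rw [eB0, eB1, hB0, hB1]; simp


lemma fP0 : fP tm Bool.not 0 = 1 := by
  unfold fP
  have : {w : List Bool | w.length = 0 ∧ IsFactor tm w ∧ IsPalin Bool.not w} = {([] : List Bool)} := by
    ext w
    simp only [Set.mem_setOf_eq, Set.mem_singleton_iff]
    constructor
    · rintro ⟨hl, _, _⟩
      exact List.length_eq_zero_iff.mp hl
    · rintro rfl
      exact ⟨rfl, ⟨0, by simp [OccursAt]⟩, rfl⟩
  rw [this, Set.ncard_singleton]

lemma fP2_s8 : fP tm Bool.not 2 = 2 := by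
  unfold fP
  have : {w : List Bool | w.length = 2 ∧ IsFactor tm w ∧ IsPalin Bool.not w} =
      {[false, true], [true, false]} := by
    ext w
    simp only [Set.mem_setOf_eq, Set.mem_insert_iff, Set.mem_singleton_iff]
    constructor
    · rintro ⟨hl, hf, hpal⟩
      obtain ⟨i, rfl⟩ := factor_iff.mp ⟨hl, hf⟩
      rw [palin_iff] at hpal
      have h0 := hpal 0 (by norm_num)
      norm_num at h0
      have hw : word i 2 = [tm (i+0), tm (i+1)] := by
        simp [word, List.range_succ]
      rw [hw]
      cases hti : tm i
      · left
        simp [Nat.add_zero, hti, h0]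
      · right
        simp [Nat.add_zero, hti, h0]
    · rintro (rfl | rfl)
      · refine ⟨rfl, ⟨0, ?_⟩, by rfl⟩
        show [false, true] = (List.range 2).map fun k => tm (0 + k)
        simp [List.range_succ, tm0, tm1]
      · refine ⟨rfl, ⟨2, ?_⟩, by rfl⟩
        show [true, false] = (List.range 2).map fun k => tm (2 + k)
        simp [List.range_succ, tm2, tm3]
  rw [this, Set.ncard_pair (by simp)]

lemma fPodd (n : ℕ) (hn : Odd n) : fP tm Bool.not n = 0 := by
  unfold fP
  convert Set.ncard_empty (List Bool)
  ext w
  simp only [Set.mem_setOf_eq, Set.mem_empty_iff_false, iff_false]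
  rintro ⟨hl, hf, hpal⟩
  obtain ⟨t, rfl⟩ := hn
  obtain ⟨i, rfl⟩ := factor_iff.mp ⟨hl, hf⟩
  rw [palin_iff] at hpal
  have := hpal t (by omega)
  rw [show 2*t+1-1-t = t by omega] at this
  cases tm (i+t) <;> simp_all

lemma fP4 (k m : ℕ) (hk : 1 ≤ k) (h1 : 4^(k-1) < m) (h2 : m ≤ 3*4^(k-1)) :
    fP tm Bool.not (2*m) = 4 := by
  unfold fP
  rw [main4 k m hk h1 h2]
  obtain ⟨d1, d2, d3, d4, d5, d6⟩ := distinct4 k m hk h1 h2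
  rw [Set.ncard_insert_of_notMem (by simp [d1, d2, d3]),
    Set.ncard_insert_of_notMem (by simp [d4, d5]),
    Set.ncard_pair d6]

lemma fP2' (k m : ℕ) (hk : 1 ≤ k) (h1 : 3*4^(k-1) < m) (h2 : m ≤ 4^k) :
    fP tm Bool.not (2*m) = 2 := by
  unfold fP
  rw [main2 k m hk h1 h2]
  have hQ : (1:ℕ) ≤ 4^(k-1) := Nat.one_le_pow _ _ (by norm_num)
  rw [Set.ncard_pair (distinct2 k m hk (by omega) h2)]


/-- The `E`-palindromic complexity of the Thue-Morse word, where `E`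
is the exchange antimorphism (reversal composed with the letter exchange `0 ↔ 1`,
i.e. `antim Bool.not`).  The bounds `(1/2)·4^k < n ≤ (3/2)·4^k` and
`(3/2)·4^k < n ≤ (1/2)·4^(k+1)` are stated multiplied by `2`. -/
theorem thueMorse_E_palindromic_complexity :
    fP tm Bool.not 0 = 1 ∧
    fP tm Bool.not 2 = 2 ∧
    (∀ n : ℕ, Odd n → fP tm Bool.not n = 0) ∧
    (∀ n k : ℕ, 1 ≤ k → Even n → 4 ^ k < 2 * n → 2 * n ≤ 3 * 4 ^ k →
      fP tm Bool.not n = 4) ∧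
    (∀ n k : ℕ, 1 ≤ k → Even n → 3 * 4 ^ k < 2 * n → 2 * n ≤ 4 ^ (k + 1) →
      fP tm Bool.not n = 2) := by
  refine ⟨fP0, fP2_s8, fPodd, ?_, ?_⟩
  · intro n k hk hev ha hb
    obtain ⟨m, rfl⟩ : ∃ m, n = 2*m := by
      obtain ⟨r, hr⟩ := hev
      exact ⟨r, by omega⟩
    have hp : (4:ℕ)^k = 4^(k-1)*4 := by
      have := pow_succ 4 (k-1)
      rwa [Nat.sub_add_cancel hk] at this
    rw [hp] at ha hb
    exact fP4 k m hk (by omega) (by omega)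
  · intro n k hk hev ha hb
    obtain ⟨m, rfl⟩ : ∃ m, n = 2*m := by
      obtain ⟨r, hr⟩ := hev
      exact ⟨r, by omega⟩
    have hp : (4:ℕ)^k = 4^(k-1)*4 := by
      have := pow_succ 4 (k-1)
      rwa [Nat.sub_add_cancel hk] at this
    have hp2 : (4:ℕ)^(k+1) = 4^k*4 := pow_succ 4 k
    rw [hp2, hp] at hb
    rw [hp] at ha
    exact fP2' k m hk (by omega) (by omega)
end

section
/- The first difference of the factor complexity of the Thue-Morse word u_TM satisfies: ΔC(0) = 1; ΔC(n) = 4 if 2^k < n ≤ 3·2^{k−1} for some k ≥ 1; and ΔC(n) = 2 otherwise. -/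
open scoped Classical

/-!
A factor of length `L ≥ 4` of the Thue-Morse word cannot occur both at an even and at an odd
position: since `tm (2i+1) = !tm (2i)`, that would force a cube `aaa` in `tm`, which the same
identity rules out. A factor at position `2i + s` (`s ≤ 1`) determines, and is determined by, the
factor of length `(L + s + 1) / 2` at position `i`. Hence `C L = C ((L + 1) / 2) + C (L / 2 + 1)`
for `L ≥ 4`, i.e. `ΔC (2n) = ΔC n` and `ΔC (2n + 1) = ΔC (n + 1)` for `n ≥ 2`, and the formula
follows by induction from `C 1, …, C 4 = 2, 4, 6, 10`.
-/

open Set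

theorem Set.ncard_range_eq_of_eq_iff {ι α β : Type*} {f : ι → α} {g : ι → β}
    (h : ∀ i j, f i = f j ↔ g i = g j) : (range f).ncard = (range g).ncard := by
  set p : ι → α × β := fun i => (f i, g i)
  have hf : InjOn Prod.fst (range p) := by
    rintro _ ⟨i, rfl⟩ _ ⟨j, rfl⟩ hij
    exact Prod.ext hij ((h i j).1 hij)
  have hg : InjOn Prod.snd (range p) := by
    rintro _ ⟨i, rfl⟩ _ ⟨j, rfl⟩ hij
    exact Prod.ext ((h i j).2 hij) hij
  rw [show f = Prod.fst ∘ p from rfl, show g = Prod.snd ∘ p from rfl, range_comp, range_comp,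
    hf.ncard_image, hg.ncard_image]

def window {A : Type*} (u : ℕ → A) (i n : ℕ) : List A :=
  (List.range n).map fun k => u (i + k)

section Window

variable {A : Type*} (u : ℕ → A)

@[simp]
theorem length_window (i n : ℕ) : (window u i n).length = n := by
  simp [window]

theorem window_eq_window_iff {i j n : ℕ} :
    window u i n = window u j n ↔ ∀ k < n, u (i + k) = u (j + k) := by
  simp [window, List.map_inj_left]

theorem fC_eq_ncard_range_window (n : ℕ) : fC u n = (range fun i => window u i n).ncard := by
  unfold fC IsFactor OccursAt
  congr 1
  ext w
  constructor
  · rintro ⟨rfl, i, hi⟩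
    exact ⟨i, hi.symm⟩
  · rintro ⟨i, rfl⟩
    exact ⟨length_window u i n, i, by rw [length_window]; rfl⟩

theorem fC_zero : fC u 0 = 1 := by
  simp [fC_eq_ncard_range_window, window]

theorem fC_one : fC u 1 = (range u).ncard := by
  rw [fC_eq_ncard_range_window]
  exact ncard_range_eq_of_eq_iff fun i j => by simp [window]

theorem range_window_eq_union_even_odd (n : ℕ) :
    (range fun i => window u i n) =
      (range fun i => window u (2 * i) n) ∪ range fun i => window u (2 * i + 1) n := by
  ext w
  constructor
  · rintro ⟨i, rfl⟩
    obtain ⟨k, rfl | rfl⟩ := Nat.even_or_odd' i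
    exacts [Or.inl ⟨k, rfl⟩, Or.inr ⟨k, rfl⟩]
  · rintro (⟨k, rfl⟩ | ⟨k, rfl⟩) <;> exact ⟨_, rfl⟩

theorem finite_range_window [Finite A] (f : ℕ → ℕ) (n : ℕ) :
    (range fun i => window u (f i) n).Finite :=
  (List.finite_length_eq A n).subset <| by
    rintro _ ⟨i, rfl⟩
    exact length_window u _ n

end Window

theorem tm_two_mul (n : ℕ) : tm (2 * n) = tm n := by
  rcases Nat.eq_zero_or_pos n with rfl | hn
  · rfl
  · simp [tm, Nat.digits_def' one_lt_two (by omega : 0 < 2 * n)]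

theorem tm_two_mul_add_one (n : ℕ) : tm (2 * n + 1) = !tm n := by
  simp only [tm, Nat.digits_def' one_lt_two (Nat.succ_pos _), List.sum_cons,
    show (2 * n + 1) % 2 = 1 by omega, show (2 * n + 1) / 2 = n by omega]
  rcases Nat.mod_two_eq_zero_or_one (Nat.digits 2 n).sum with h | h <;>
    simp [Nat.add_mod, h]

theorem tm_not_cube (i : ℕ) : ¬(tm i = tm (i + 1) ∧ tm (i + 1) = tm (i + 2)) := by
  rintro ⟨h₁, h₂⟩
  obtain ⟨k, rfl | rfl⟩ := Nat.even_or_odd' i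
  · rw [tm_two_mul, tm_two_mul_add_one] at h₁
    cases tm k <;> simp at h₁
  · rw [show 2 * k + 1 + 1 = 2 * (k + 1) by ring, show 2 * k + 1 + 2 = 2 * (k + 1) + 1 by ring,
      tm_two_mul, tm_two_mul_add_one] at h₂
    cases tm (k + 1) <;> simp at h₂

theorem tm_two_mul_add_eq_iff (i j t : ℕ) :
    tm (2 * i + t) = tm (2 * j + t) ↔ tm (i + t / 2) = tm (j + t / 2) := by
  obtain ⟨q, rfl | rfl⟩ := Nat.even_or_odd' t
  · simp only [← mul_add, tm_two_mul, Nat.mul_div_cancel_left q two_pos]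
  · rw [show (2 * q + 1) / 2 = q by omega, ← add_assoc, ← add_assoc, ← mul_add, ← mul_add,
      tm_two_mul_add_one, tm_two_mul_add_one, Bool.not_inj_iff]

theorem window_tm_two_mul_add_eq_iff {s L : ℕ} (hs : s ≤ 1) (hL : 1 ≤ L) (i j : ℕ) :
    window tm (2 * i + s) L = window tm (2 * j + s) L ↔
      window tm i ((L + s + 1) / 2) = window tm j ((L + s + 1) / 2) := by
  simp only [window_eq_window_iff, add_assoc, tm_two_mul_add_eq_iff]
  constructor
  · intro h k hk
    simpa [show (s + (2 * k - s)) / 2 = k by omega] using h (2 * k - s) (by omega)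
  · exact fun h t ht => h _ (by omega)

theorem window_tm_two_mul_ne {L : ℕ} (hL : 4 ≤ L) (i j : ℕ) :
    window tm (2 * i) L ≠ window tm (2 * j + 1) L := by
  intro h
  rw [window_eq_window_iff] at h
  -- `tm (2i+1) = !tm (2i)` and `tm (2i+3) = !tm (2i+2)` transported to position `2j+1`
  -- give `tm j = tm (j+1) = tm (j+2)`.
  have h₀ := h 0 (by omega)
  have h₁ := h 1 (by omega)
  have h₂ := h 2 (by omega)
  have h₃ := h 3 (by omega)
  simp only [show 2 * i + 2 = 2 * (i + 1) by ring, show 2 * i + 3 = 2 * (i + 1) + 1 by ring,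
    show 2 * j + 1 + 1 = 2 * (j + 1) by ring, show 2 * j + 1 + 2 = 2 * (j + 1) + 1 by ring,
    show 2 * j + 1 + 3 = 2 * (j + 2) by ring, add_zero, tm_two_mul, tm_two_mul_add_one]
    at h₀ h₁ h₂ h₃
  apply tm_not_cube j
  cases tm i <;> cases tm (i + 1) <;> simp_all

theorem ncard_range_window_tm_two_mul_add {s L : ℕ} (hs : s ≤ 1) (hL : 1 ≤ L) :
    (range fun i => window tm (2 * i + s) L).ncard = fC tm ((L + s + 1) / 2) := by
  rw [fC_eq_ncard_range_window]
  exact ncard_range_eq_of_eq_iff (window_tm_two_mul_add_eq_iff hs hL)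

theorem fC_tm_eq_add {L : ℕ} (hL : 4 ≤ L) : fC tm L = fC tm ((L + 1) / 2) + fC tm (L / 2 + 1) := by
  have hdisj : Disjoint (range fun i => window tm (2 * i) L)
      (range fun i => window tm (2 * i + 1) L) :=
    disjoint_range_iff.2 (window_tm_two_mul_ne hL)
  rw [fC_eq_ncard_range_window, range_window_eq_union_even_odd,
    ncard_union_eq hdisj (finite_range_window _ _ _) (finite_range_window _ _ _),
    ncard_range_window_tm_two_mul_add (s := 1) le_rfl (by omega),
    show (L + 1 + 1) / 2 = L / 2 + 1 by omega]
  simpa using ncard_range_window_tm_two_mul_add (s := 0) zero_le_one (by omega : 1 ≤ L)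

theorem fC_tm_two_mul {n : ℕ} (hn : 2 ≤ n) : fC tm (2 * n) = fC tm n + fC tm (n + 1) := by
  rw [fC_tm_eq_add (by omega), show (2 * n + 1) / 2 = n by omega, show 2 * n / 2 = n by omega]

theorem fC_tm_two_mul_add_one {n : ℕ} (hn : 2 ≤ n) : fC tm (2 * n + 1) = 2 * fC tm (n + 1) := by
  rw [fC_tm_eq_add (by omega), show (2 * n + 1 + 1) / 2 = n + 1 by omega,
    show (2 * n + 1) / 2 = n by omega, two_mul]

theorem fC_tm_one : fC tm 1 = 2 := by
  have : range tm = univ := eq_univ_of_forall fun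
    | false => ⟨0, by decide⟩
    | true => ⟨1, by decide⟩
  rw [fC_one, this, ncard_univ, Nat.card_eq_fintype_card, Fintype.card_bool]

theorem fC_tm_two : fC tm 2 = 4 := by
  have : (range fun i => window tm i 2) =
      {[false, false], [false, true], [true, false], [true, true]} := by
    ext w
    constructor
    · rintro ⟨i, rfl⟩
      simp only [window, List.range_succ, List.range_zero, List.nil_append, List.cons_append,
        List.map_cons, List.map_nil, add_zero]
      cases tm i <;> cases tm (i + 1) <;> simp
    · rintro (rfl | rfl | rfl | rfl)
      exacts [⟨5, by decide⟩, ⟨0, by decide⟩, ⟨2, by decide⟩, ⟨1, by decide⟩]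
  rw [fC_eq_ncard_range_window, this, ncard_eq_toFinset_card']
  decide

theorem fC_tm_three : fC tm 3 = 6 := by
  have : (range fun i => window tm i 3) =
      {[false, false, true], [false, true, false], [false, true, true],
        [true, false, false], [true, false, true], [true, true, false]} := by
    ext w
    constructor
    · rintro ⟨i, rfl⟩
      have := tm_not_cube i
      revert this
      simp only [window, List.range_succ, List.range_zero, List.nil_append, List.cons_append,
        List.map_cons, List.map_nil, add_zero]
      cases tm i <;> cases tm (i + 1) <;> cases tm (i + 2) <;> simp_all
    · rintro (rfl | rfl | rfl | rfl | rfl | rfl)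
      exacts [⟨5, by decide⟩, ⟨3, by decide⟩, ⟨0, by decide⟩, ⟨4, by decide⟩, ⟨2, by decide⟩,
        ⟨1, by decide⟩]
  rw [fC_eq_ncard_range_window, this, ncard_eq_toFinset_card']
  decide

def InLowerHalfDyadic (n : ℕ) : Prop :=
  ∃ m, 2 ^ m < n ∧ 2 * n ≤ 3 * 2 ^ m

theorem inLowerHalfDyadic_iff (n : ℕ) :
    InLowerHalfDyadic n ↔ ∃ k, 1 ≤ k ∧ 2 ^ k < n ∧ n ≤ 3 * 2 ^ (k - 1) := by
  constructor
  · rintro ⟨_ | m, h₁, h₂⟩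
    · simp only [pow_zero] at h₁ h₂
      omega
    · rw [pow_succ] at h₂
      exact ⟨m + 1, by omega, h₁, by simp only [Nat.add_sub_cancel]; omega⟩
  · rintro ⟨_ | k, hk, h₁, h₂⟩
    · omega
    · rw [Nat.add_sub_cancel] at h₂
      exact ⟨k + 1, h₁, by rw [pow_succ]; omega⟩

theorem not_inLowerHalfDyadic_of_le_two {n : ℕ} (hn : n ≤ 2) : ¬InLowerHalfDyadic n := by
  rintro ⟨_ | m, h₁, h₂⟩
  · simp only [pow_zero] at h₁ h₂
    omega
  · have := Nat.one_le_two_pow (n := m)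
    rw [pow_succ] at h₁
    omega

theorem inLowerHalfDyadic_two_mul (n : ℕ) : InLowerHalfDyadic (2 * n) ↔ InLowerHalfDyadic n := by
  constructor
  · rintro ⟨_ | m, h₁, h₂⟩
    · simp only [pow_zero] at h₁ h₂
      omega
    · rw [pow_succ] at h₁ h₂
      exact ⟨m, by omega, by omega⟩
  · rintro ⟨m, h₁, h₂⟩
    exact ⟨m + 1, by rw [pow_succ]; omega, by rw [pow_succ]; omega⟩

theorem inLowerHalfDyadic_two_mul_add_one {n : ℕ} (hn : n ≠ 1) :
    InLowerHalfDyadic (2 * n + 1) ↔ InLowerHalfDyadic (n + 1) := by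
  constructor
  · rintro ⟨_ | _ | m, h₁, h₂⟩
    · simp only [pow_zero] at h₁ h₂
      omega
    · simp only [zero_add, pow_one] at h₁ h₂
      omega
    · rw [pow_succ, pow_succ] at h₁ h₂
      exact ⟨m + 1, by rw [pow_succ]; omega, by rw [pow_succ]; omega⟩
  · rintro ⟨m, h₁, h₂⟩
    exact ⟨m + 1, by rw [pow_succ]; omega, by rw [pow_succ]; omega⟩

theorem fC_tm_succ : ∀ n, n ≠ 0 → fC tm (n + 1) = fC tm n + if InLowerHalfDyadic n then 4 else 2
  | 1, _ => by rw [fC_tm_two, fC_tm_one, if_neg (not_inLowerHalfDyadic_of_le_two (by norm_num))]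
  | 2, _ => by rw [fC_tm_three, fC_tm_two, if_neg (not_inLowerHalfDyadic_of_le_two le_rfl)]
  | 3, _ => by
    rw [fC_tm_two_mul (n := 2) le_rfl, fC_tm_two, fC_tm_three, if_pos ⟨1, by norm_num, by norm_num⟩]
  | n + 4, _ => by
    obtain ⟨m, h | h⟩ := Nat.even_or_odd' (n + 4)
    · have ih := fC_tm_succ m (by omega)
      rw [h, fC_tm_two_mul_add_one (by omega), fC_tm_two_mul (by omega),
        inLowerHalfDyadic_two_mul]
      omega
    · have ih := fC_tm_succ (m + 1) (by omega)
      rw [h, show 2 * m + 1 + 1 = 2 * (m + 1) by ring, fC_tm_two_mul (by omega),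
        fC_tm_two_mul_add_one (by omega), inLowerHalfDyadic_two_mul_add_one (by omega)]
      omega

/-- The first difference of the factor complexity of the
Thue-Morse word: `ΔC(0) = 1`, `ΔC(n) = 4` if `2^k < n ≤ 3·2^(k−1)` for some `k ≥ 1`,
and `ΔC(n) = 2` otherwise. -/
theorem thueMorse_factor_complexity_difference :
    (fC tm 1 : ℤ) - fC tm 0 = 1 ∧
    (∀ n k : ℕ, 1 ≤ k → 2 ^ k < n → n ≤ 3 * 2 ^ (k - 1) →
      (fC tm (n + 1) : ℤ) - fC tm n = 4) ∧
    (∀ n : ℕ, n ≠ 0 → (¬ ∃ k : ℕ, 1 ≤ k ∧ 2 ^ k < n ∧ n ≤ 3 * 2 ^ (k - 1)) →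
      (fC tm (n + 1) : ℤ) - fC tm n = 2) := by
  refine ⟨by rw [fC_tm_one, fC_zero]; norm_num, fun n k hk h₁ h₂ => ?_, fun n hn h => ?_⟩
  · rw [fC_tm_succ n (Nat.zero_lt_of_lt h₁).ne',
      if_pos ((inLowerHalfDyadic_iff n).2 ⟨k, hk, h₁, h₂⟩)]
    push_cast
    ring
  · rw [fC_tm_succ n hn, if_neg (mt (inLowerHalfDyadic_iff n).1 h)]
    push_cast
    ring
end
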